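/- arXiv:1409.5641 — 5 statements merged into one kernel-verified Lean document; each statement's English description precedes it below -/
import Mathlib

section
/- Let n and σ be even integers with 2 < σ < n/2 and let the alphabet be a₁ < a₂ < ⋯ < a_σ. Every decision tree processing strings of length n over this alphabet that finds the Lempel–Ziv factorization has height at least ⌊(n − 1.5σ − 2)/2⌋ · log₃(σ/2 − 1). (In particular, constructing the Lempel–Ziv factorization of a string of length n with at most σ distinct letters requires Ω(n log σ) comparisons of letters in the worst case.) -/
/-- `p` is a period of the substring `t[i..j]` of the 1-indexed string `t`:
`1 ≤ p ≤ |t[i..j]| = j - i + 1`, and `t[k] = t[k + p]` whenever both positions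
lie in `[i..j]` (vacuously, the length is always a period). -/
def IsPeriodOf {α : Type*} (t : ℕ → α) (i j p : ℕ) : Prop :=
  1 ≤ p ∧ p ≤ j + 1 - i ∧ ∀ k, i ≤ k → k + p ≤ j → t (k + p) = t k

/-- The minimal period of the substring `t[i..j]`. -/
noncomputable def minPeriod {α : Type*} (t : ℕ → α) (i j : ℕ) : ℕ :=
  sInf {p | IsPeriodOf t i j p}

/-- `t[i..j]` is a run of the string `t[1..n]`: its exponent is at least `2`
(i.e. `j - i + 1 ≥ 2 · minPeriod`), and the extensions `t[i-1..j]` (if `i > 1`)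
and `t[i..j+1]` (if `j < n`) have strictly larger minimal periods. -/
def IsRun {α : Type*} (t : ℕ → α) (n i j : ℕ) : Prop :=
  1 ≤ i ∧ i ≤ j ∧ j ≤ n ∧
  2 * minPeriod t i j ≤ j + 1 - i ∧
  (1 < i → minPeriod t i j < minPeriod t (i - 1) j) ∧
  (j < n → minPeriod t i j < minPeriod t i (j + 1))

/-- A decision tree processing strings of length `n`: every internal node is
labeled with a pair `(i, j)` of positions and has three children corresponding
to the outcomes `t[i] < t[j]`, `t[i] = t[j]`, `t[i] > t[j]`. -/
inductive DecisionTree : Type where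
  | leaf : DecisionTree
  | node (i j : ℕ) (lt eq gt : DecisionTree) : DecisionTree

namespace DecisionTree

/-- All node labels `(i, j)` satisfy `1 ≤ i, j ≤ n`. -/
def WF (n : ℕ) : DecisionTree → Prop
  | .leaf => True
  | .node i j l e g => 1 ≤ i ∧ i ≤ n ∧ 1 ≤ j ∧ j ≤ n ∧ WF n l ∧ WF n e ∧ WF n g

/-- The computation path of the string `t` through the tree, recorded as the
list of edge labels; it uniquely identifies the leaf reached by `t`
(two strings reach the same leaf iff their paths are equal). -/
def path {α : Type*} [LinearOrder α] : DecisionTree → (ℕ → α) → List Ordering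
  | .leaf, _ => []
  | .node i j l e g, t =>
    if t i < t j then Ordering.lt :: path l t
    else if t i = t j then Ordering.eq :: path e t
    else Ordering.gt :: path g t

/-- The height of a decision tree: the maximum number of edges on a
root-to-leaf path. -/
def height : DecisionTree → ℕ
  | .leaf => 0
  | .node _ _ l e g => 1 + max (height l) (max (height e) (height g))

/-- The basic height of a decision tree: the maximum, over root-to-leaf paths,
of the number of edges labeled `<` or `>`. -/
def basicHeight : DecisionTree → ℕ
  | .leaf => 0
  | .node _ _ l e g =>
    max (1 + max (basicHeight l) (basicHeight g)) (basicHeight e)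

end DecisionTree

/-- The length of the next Lempel–Ziv factor of `t[1..n]` starting at position
`j + 1`: the length of the longest prefix of `t[j+1..n]` having an occurrence
starting at some position `≤ j`, or `1` if there is no such nonempty prefix. -/
noncomputable def lzLen {α : Type*} (t : ℕ → α) (n j : ℕ) : ℕ :=
  max 1 (sSup {l | l ≤ n - j ∧ ∃ s, 1 ≤ s ∧ s ≤ j ∧ ∀ k < l, t (s + k) = t (j + 1 + k)})

/-- The list of lengths of the Lempel–Ziv factors of `t[1..n]`, starting after
the already factorized prefix `t[1..j]`.  Two strings have equivalent
Lempel–Ziv factorizations iff these lists (for `j = 0`) coincide. -/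
noncomputable def lzList {α : Type*} (t : ℕ → α) (n j : ℕ) : List ℕ :=
  if h : j < n then lzLen t n j :: lzList t n (j + lzLen t n j) else []
termination_by n - j
decreasing_by
  have h1 : 1 ≤ lzLen t n j := le_max_left _ _
  omega


/-! ### Auxiliary machinery for the lower bound -/

section LZAux

open DecisionTree

variable {α : Type*}

/-- Comparison outcome used by decision trees. -/
def pOrd [LinearOrder α] (t : ℕ → α) (i j : ℕ) : Ordering :=
  if t i < t j then Ordering.lt else if t i = t j then Ordering.eq else Ordering.gt

lemma pOrd_lt_iff [LinearOrder α] {t : ℕ → α} {i j : ℕ} :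
    pOrd t i j = Ordering.lt ↔ t i < t j := by
  unfold pOrd
  by_cases h1 : t i < t j
  · simp [h1]
  · by_cases h2 : t i = t j <;> simp [h1, h2]

lemma pOrd_eq_iff [LinearOrder α] {t : ℕ → α} {i j : ℕ} :
    pOrd t i j = Ordering.eq ↔ t i = t j := by
  unfold pOrd
  by_cases h1 : t i < t j
  · simp [h1, ne_of_lt h1]
  · by_cases h2 : t i = t j <;> simp [h1, h2]

lemma pOrd_gt_iff [LinearOrder α] {t : ℕ → α} {i j : ℕ} :
    pOrd t i j = Ordering.gt ↔ t j < t i := by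
  unfold pOrd
  by_cases h1 : t i < t j
  · simp [h1, lt_asymm h1]
  · by_cases h2 : t i = t j
    · simp [h1, h2]
    · simp [h1, h2, lt_of_le_of_ne (not_lt.mp h1) (Ne.symm h2)]

lemma pOrd_congr [LinearOrder α] {s s' : ℕ → α} {i j : ℕ}
    (h1 : s i = s' i) (h2 : s j = s' j) : pOrd s i j = pOrd s' i j := by
  unfold pOrd; rw [h1, h2]

/-- branch selection -/
def pSel (l e g : DecisionTree) : Ordering → DecisionTree
  | Ordering.lt => l
  | Ordering.eq => e
  | Ordering.gt => g

lemma path_node [LinearOrder α] (i j : ℕ) (l e g : DecisionTree) (t : ℕ → α) :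
    path (DecisionTree.node i j l e g) t
      = pOrd t i j :: path (pSel l e g (pOrd t i j)) t := by
  by_cases h1 : t i < t j
  · simp [path, pOrd, pSel, h1]
  · by_cases h2 : t i = t j
    · simp [path, pOrd, pSel, h1, h2]
    · simp [path, pOrd, pSel, h1, h2]

lemma path_congr_of_pOrd [LinearOrder α] (T : DecisionTree) (u v s : ℕ → α)
    (H : ∀ i j, pOrd u i j = pOrd v i j → pOrd s i j = pOrd u i j)
    (huv : path T u = path T v) : path T s = path T u := by
  induction T with
  | leaf => rfl
  | node i j l e g ihl ihe ihg =>
    rw [path_node, path_node] at huv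
    rw [path_node, path_node]
    injection huv with hhead htail
    have hs := H i j hhead
    rw [hs]
    congr 1
    rw [← hhead] at htail
    cases ho : pOrd u i j with
    | lt => rw [ho] at htail; exact ihl htail
    | eq => rw [ho] at htail; exact ihe htail
    | gt => rw [ho] at htail; exact ihg htail

/-- all possible paths through a tree -/
def allPaths : DecisionTree → Finset (List Ordering)
  | DecisionTree.leaf => {([] : List Ordering)}
  | DecisionTree.node _ _ l e g =>
      ((allPaths l).image (Ordering.lt :: ·) ∪ (allPaths e).image (Ordering.eq :: ·))
        ∪ (allPaths g).image (Ordering.gt :: ·)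

lemma allPaths_node (i j : ℕ) (l e g : DecisionTree) :
    allPaths (DecisionTree.node i j l e g)
      = ((allPaths l).image (Ordering.lt :: ·) ∪ (allPaths e).image (Ordering.eq :: ·))
        ∪ (allPaths g).image (Ordering.gt :: ·) := rfl

lemma path_mem_allPaths [LinearOrder α] (T : DecisionTree) (t : ℕ → α) :
    path T t ∈ allPaths T := by
  induction T with
  | leaf => simp [path, allPaths]
  | node i j l e g ihl ihe ihg =>
    rw [path_node, allPaths_node]
    cases ho : pOrd t i j with
    | lt =>
      simp only [Finset.mem_union, Finset.mem_image, pSel]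
      exact Or.inl (Or.inl ⟨_, ihl, rfl⟩)
    | eq =>
      simp only [Finset.mem_union, Finset.mem_image, pSel]
      exact Or.inl (Or.inr ⟨_, ihe, rfl⟩)
    | gt =>
      simp only [Finset.mem_union, Finset.mem_image, pSel]
      exact Or.inr ⟨_, ihg, rfl⟩

lemma card_allPaths_le (T : DecisionTree) : (allPaths T).card ≤ 3 ^ T.height := by
  induction T with
  | leaf => simp [allPaths, DecisionTree.height]
  | node i j l e g ihl ihe ihg =>
    have ha : ((allPaths l).image (Ordering.lt :: ·)
          ∪ (allPaths e).image (Ordering.eq :: ·)).card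
        ≤ (allPaths l).card + (allPaths e).card :=
      le_trans (Finset.card_union_le _ _)
        (Nat.add_le_add Finset.card_image_le Finset.card_image_le)
    have h1 : (allPaths (DecisionTree.node i j l e g)).card
        ≤ (allPaths l).card + (allPaths e).card + (allPaths g).card := by
      rw [allPaths_node]
      exact le_trans (Finset.card_union_le _ _) (Nat.add_le_add ha Finset.card_image_le)
    have hm : DecisionTree.height (DecisionTree.node i j l e g)
        = 1 + max l.height (max e.height g.height) := rfl
    have hl3 : (3:ℕ) ^ l.height ≤ 3 ^ max l.height (max e.height g.height) :=
      Nat.pow_le_pow_right (by norm_num) (le_max_left _ _)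
    have he3 : (3:ℕ) ^ e.height ≤ 3 ^ max l.height (max e.height g.height) :=
      Nat.pow_le_pow_right (by norm_num) (le_max_of_le_right (le_max_left _ _))
    have hg3 : (3:ℕ) ^ g.height ≤ 3 ^ max l.height (max e.height g.height) :=
      Nat.pow_le_pow_right (by norm_num) (le_max_of_le_right (le_max_right _ _))
    rw [hm, pow_add, pow_one]
    omega

/-! ### Lemmas about `lzLen` and `lzList` -/

lemma lzLen_one_le (t : ℕ → α) (n j : ℕ) : 1 ≤ lzLen t n j := le_max_left _ _

lemma lzLen_lower (t : ℕ → α) {n j l : ℕ} (hln : l ≤ n - j)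
    {s : ℕ} (hs1 : 1 ≤ s) (hsj : s ≤ j)
    (hm : ∀ k < l, t (s + k) = t (j + 1 + k)) : l ≤ lzLen t n j := by
  have hmem : l ∈ {l | l ≤ n - j ∧ ∃ s, 1 ≤ s ∧ s ≤ j ∧ ∀ k < l, t (s + k) = t (j + 1 + k)} :=
    ⟨hln, s, hs1, hsj, hm⟩
  exact le_trans (le_csSup ⟨n - j, fun x hx => hx.1⟩ hmem) (le_max_right _ _)

lemma lzLen_spec (t : ℕ → α) (n j : ℕ) (h2 : 2 ≤ lzLen t n j) :
    ∃ s, 1 ≤ s ∧ s ≤ j ∧ ∀ k < lzLen t n j, t (s + k) = t (j + 1 + k) := by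
  set S := {l | l ≤ n - j ∧ ∃ s, 1 ≤ s ∧ s ≤ j ∧ ∀ k < l, t (s + k) = t (j + 1 + k)} with hS
  have hdef : lzLen t n j = max 1 (sSup S) := rfl
  rcases max_choice 1 (sSup S) with h | h
  · omega
  · have hsup : lzLen t n j = sSup S := by omega
    have hne : S.Nonempty := by
      by_contra hemp
      rw [Set.not_nonempty_iff_eq_empty] at hemp
      rw [hemp] at hsup
      simp [csSup_empty] at hsup
      omega
    have hbdd : BddAbove S := ⟨n - j, fun x hx => hx.1⟩
    have hmem := Nat.sSup_mem hne hbdd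
    rw [← hsup] at hmem
    obtain ⟨-, s, hs1, hsj, hmatch⟩ := hmem
    exact ⟨s, hs1, hsj, hmatch⟩

lemma lzLen_eq_one (t : ℕ → α) (n j : ℕ)
    (h : ∀ s, 1 ≤ s → s ≤ j → t s ≠ t (j + 1)) : lzLen t n j = 1 := by
  by_contra hne
  have h2 : 2 ≤ lzLen t n j := by have := lzLen_one_le t n j; omega
  obtain ⟨s, hs1, hsj, hmatch⟩ := lzLen_spec t n j h2
  have := hmatch 0 (by omega)
  simp at this
  exact h s hs1 hsj this

lemma lzList_eq (t : ℕ → α) {n j : ℕ} (hj : j < n) :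
    lzList t n j = lzLen t n j :: lzList t n (j + lzLen t n j) := by
  rw [lzList]
  simp [hj]

/-- The key separation lemma: if `t` and `t'` agree strictly below `P`, the letter
`t' P` is fresh in `t'` (never occurs before `P`), while `t P` together with its
successor has an occurrence strictly before `P` in `t`, then the LZ factorization
lists differ. -/
lemma lz_differs (t t' : ℕ → α) (n P : ℕ)
    (hP1 : 1 ≤ P) (hPn : P + 1 ≤ n)
    (hagree : ∀ i < P, t' i = t i)
    (hfresh : ∀ i < P, t' i ≠ t' P)
    (hmatch : ∃ s, 1 ≤ s ∧ s + 1 ≤ P ∧ t s = t P ∧ t (s + 1) = t (P + 1)) :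
    lzList t n 0 ≠ lzList t' n 0 := by
  suffices hmain : ∀ N j, n - j ≤ N → j < P → lzList t n j ≠ lzList t' n j by
    exact hmain n 0 (by omega) (by omega)
  intro N
  induction N with
  | zero => intro j hN hjP; omega
  | succ N ih =>
    intro j hN hjP heq
    have hjn : j < n := by omega
    rw [lzList_eq t hjn, lzList_eq t' hjn] at heq
    have hhead : lzLen t n j = lzLen t' n j := (List.cons.injEq _ _ _ _ ▸ heq).1
    have htail := (List.cons.injEq _ _ _ _ ▸ heq).2
    by_cases hlast : j + 1 = P
    · -- at the position just before P the lengths differ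
      have h2 : 2 ≤ lzLen t n j := by
        obtain ⟨s, hs1, hsP, hm0, hm1⟩ := hmatch
        refine lzLen_lower t (by omega) hs1 (by omega) ?_
        intro k hk
        interval_cases k
        · simpa [hlast] using hm0
        · have : j + 1 + 1 = P + 1 := by omega
          rw [this]
          simpa using hm1
      have h1 : lzLen t' n j = 1 := by
        refine lzLen_eq_one t' n j ?_
        intro s hs1 hsj
        rw [hlast]
        exact hfresh s (by omega)
      omega
    · -- j + 1 < P
      set L := lzLen t' n j with hL
      by_cases hcov : j + L < P
      · -- recurse
        have hstep : lzLen t n j = L := hhead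
        rw [hstep] at htail
        have hL1 : 1 ≤ L := lzLen_one_le t' n j
        exact ih (j + L) (by omega) (by omega) htail
      · -- the factor of t' would cover position P: impossible
        have hL2 : 2 ≤ L := by
          have : P ≤ j + L := by omega
          omega
        obtain ⟨s, hs1, hsj, hmm⟩ := lzLen_spec t' n j hL2
        have hk : P - j - 1 < L := by omega
        have := hmm (P - j - 1) hk
        have harg : j + 1 + (P - j - 1) = P := by omega
        rw [harg] at this
        exact hfresh (s + (P - j - 1)) (by omega) this

/-! ### The witness family -/

/-- Letter index at position `i` of the witness string with digits `e`.
Prefix `[1, 2h-1]`: even positions `i` carry letter `i`, odd carry `0`.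
Digit blocks: position `2h + 2k` carries `0`, position `2h + 2k + 1` (for `k < m`)
carries letter `2 * e k`.  Everything else carries `0`. -/
def lzIdx (h m : ℕ) (e : ℕ → ℕ) (i : ℕ) : ℕ :=
  if 1 ≤ i ∧ i ≤ 2 * h - 1 then (if Even i then i else 0)
  else if 2 * h ≤ i ∧ i < 2 * h + 2 * m ∧ ¬ Even i then 2 * e ((i - 2 * h) / 2) else 0

lemma lzIdx_even (h m : ℕ) (e : ℕ → ℕ) (i : ℕ) : Even (lzIdx h m e i) := by
  unfold lzIdx
  split_ifs with h1 h2 h3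
  · exact h2
  · exact Even.zero
  · exact ⟨e _, by ring⟩
  · exact Even.zero

lemma lzIdx_lt (h m : ℕ) (e : ℕ → ℕ) (he : ∀ k, e k ≤ h - 1) (hh : 1 ≤ h) (i : ℕ) :
    lzIdx h m e i < 2 * h := by
  unfold lzIdx
  split_ifs with h1 h2 h3
  · omega
  · omega
  · have := he ((i - 2 * h) / 2); omega
  · omega

lemma lzIdx_digit (h m : ℕ) (e : ℕ → ℕ) {k : ℕ} (hk : k < m) (hh : 1 ≤ h) :
    lzIdx h m e (2 * h + 2 * k + 1) = 2 * e k := by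
  unfold lzIdx
  have hodd : ¬ Even (2 * h + 2 * k + 1) := by
    rw [Nat.even_iff]; omega
  rw [if_neg (by omega), if_pos ⟨by omega, by omega, hodd⟩]
  have h4 : (2 * h + 2 * k + 1 - 2 * h) / 2 = k := by omega
  rw [h4]

lemma lzIdx_prefix_even (h m : ℕ) (e : ℕ → ℕ) {x : ℕ} (hx : 1 ≤ x) (hxh : x ≤ h - 1) :
    lzIdx h m e (2 * x) = 2 * x := by
  unfold lzIdx
  rw [if_pos ⟨by omega, by omega⟩, if_pos ⟨x, by ring⟩]

lemma lzIdx_prefix_odd (h m : ℕ) (e : ℕ → ℕ) {x : ℕ} (hxh : 2 * x + 1 ≤ 2 * h - 1) :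
    lzIdx h m e (2 * x + 1) = 0 := by
  unfold lzIdx
  have hodd : ¬ Even (2 * x + 1) := by rw [Nat.even_iff]; omega
  rw [if_pos ⟨by omega, hxh⟩, if_neg hodd]

lemma lzIdx_after_digit (h m : ℕ) (e : ℕ → ℕ) {k : ℕ} (hk : k < m) (hh : 1 ≤ h) :
    lzIdx h m e (2 * h + 2 * k + 2) = 0 := by
  unfold lzIdx
  have heven : Even (2 * h + 2 * k + 2) := by rw [Nat.even_iff]; omega
  rw [if_neg (by omega), if_neg (by tauto)]

lemma lzIdx_ne_digitPos (h m : ℕ) (e e' : ℕ → ℕ) {i : ℕ}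
    (hne : lzIdx h m e i ≠ lzIdx h m e' i) : ∃ k, k < m ∧ i = 2 * h + 2 * k + 1 := by
  unfold lzIdx at hne
  split_ifs at hne with h1 h2 h3
  · exact absurd rfl hne
  · exact absurd rfl hne
  · obtain ⟨hge, hlt, hodd⟩ := h3
    rw [Nat.even_iff] at hodd
    exact ⟨(i - 2 * h) / 2, by omega, by omega⟩
  · exact absurd rfl hne

/-- digit function from a tuple -/
def lzDig (m D : ℕ) (g : Fin m → Fin D) (k : ℕ) : ℕ :=
  if hk : k < m then (g ⟨k, hk⟩).val + 1 else 1

lemma lzDig_lb (m D : ℕ) (g : Fin m → Fin D) (k : ℕ) : 1 ≤ lzDig m D g k := by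
  unfold lzDig; split <;> omega

lemma lzDig_ub (m D : ℕ) (g : Fin m → Fin D) (k : ℕ) (hD : 1 ≤ D) : lzDig m D g k ≤ D := by
  unfold lzDig; split
  · exact Nat.succ_le_of_lt (g _).isLt
  · omega

lemma lzDig_at (m D : ℕ) (g : Fin m → Fin D) {k : ℕ} (hk : k < m) :
    lzDig m D g k = (g ⟨k, hk⟩).val + 1 := dif_pos hk

end LZAux

/-- Any decision tree processing strings of length `n` over the ordered
alphabet `a 0 < a 1 < ⋯ < a (σ-1)` (with `n, σ` even and `2 < σ < n/2`) that
finds the Lempel–Ziv factorization has height at least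
`⌊(n - 1.5σ - 2)/2⌋ · log₃(σ/2 - 1)`. -/
theorem lempelZiv_lower_bound (n σ : ℕ) (hn : Even n) (hσ : Even σ)
    (hσ2 : 2 < σ) (hσn : σ < n / 2)
    (α : Type*) [LinearOrder α] (a : Fin σ → α) (ha : StrictMono a)
    (T : DecisionTree) (hwf : T.WF n)
    (hfinds : ∀ t₁ t₂ : ℕ → α,
      (∀ i, 1 ≤ i → i ≤ n → t₁ i ∈ Set.range a) →
      (∀ i, 1 ≤ i → i ≤ n → t₂ i ∈ Set.range a) →
      T.path t₁ = T.path t₂ → lzList t₁ n 0 = lzList t₂ n 0) :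
    (((n - 3 * σ / 2 - 2) / 2 : ℕ) : ℝ) * Real.logb 3 ((σ : ℝ) / 2 - 1)
      ≤ (T.height : ℝ) := by
  classical
  have hσ0 : σ % 2 = 0 := Nat.even_iff.mp hσ
  obtain ⟨h, hσh⟩ : ∃ h, σ = 2 * h := ⟨σ / 2, by omega⟩
  have hh2 : 2 ≤ h := by omega
  have hn4 : 4 * h + 2 ≤ n := by omega
  set m := (n - 3 * σ / 2 - 2) / 2 with hm
  have hm2 : 2 * m ≤ n - 3 * h - 2 := by omega
  set D := h - 1 with hD
  have hD1 : 1 ≤ D := by omega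
  have hσpos : 0 < σ := by omega
  -- the embedded alphabet, defined on all of ℕ
  set A : ℕ → α := fun p => a ⟨p % σ, Nat.mod_lt _ hσpos⟩ with hA
  have hAval : ∀ p, (hp : p < σ) → A p = a ⟨p, hp⟩ := by
    intro p hp
    rw [hA]
    exact congrArg a (Fin.mk_eq_mk.mpr (Nat.mod_eq_of_lt hp))
  have hArange : ∀ p, A p ∈ Set.range a := fun p => ⟨_, by rw [hA]⟩
  have hAlt : ∀ {p q}, p < σ → q < σ → (A p < A q ↔ p < q) := by
    intro p q hp hq
    rw [hAval p hp, hAval q hq, ha.lt_iff_lt]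
    exact Fin.mk_lt_mk
  have hAle : ∀ {p q}, p < σ → q < σ → (A p ≤ A q ↔ p ≤ q) := by
    intro p q hp hq
    constructor
    · intro hle
      by_contra hc
      exact absurd ((hAlt hq hp).mpr (by omega)) (not_lt.mpr hle)
    · intro hle
      rcases Nat.lt_or_ge p q with hlt | hge
      · exact le_of_lt ((hAlt hp hq).mpr hlt)
      · have : p = q := by omega
        rw [this]
  have hAinj : ∀ {p q}, p < σ → q < σ → A p = A q → p = q := by
    intro p q hp hq hpq
    rw [hAval p hp, hAval q hq] at hpq
    have := ha.injective hpq
    exact congrArg Fin.val this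
  have hAmin : ∀ {p q}, p < σ → q < σ → min (A p) (A q) = A (min p q) := by
    intro p q hp hq
    rcases le_total p q with hpq | hpq
    · rw [min_eq_left ((hAle hp hq).mpr hpq), min_eq_left hpq]
    · rw [min_eq_right ((hAle hq hp).mpr hpq), min_eq_right hpq]
  -- the witness family
  have hinj : Function.Injective
      (fun g : Fin m → Fin D => T.path (fun i => A (lzIdx h m (lzDig m D g) i))) := by
    intro g g' hpq
    by_contra hne
    obtain ⟨k0, hk0⟩ := Function.ne_iff.mp hne
    have hpq' : T.path (fun i => A (lzIdx h m (lzDig m D g) i))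
        = T.path (fun i => A (lzIdx h m (lzDig m D g') i)) := hpq
    set e : ℕ → ℕ := lzDig m D g with he
    set e' : ℕ → ℕ := lzDig m D g' with he'
    set u : ℕ → α := fun i => A (lzIdx h m e i) with hu
    set v : ℕ → α := fun i => A (lzIdx h m e' i) with hv
    have hui : ∀ i, u i = A (lzIdx h m e i) := fun i => by rw [hu]
    have hvi : ∀ i, v i = A (lzIdx h m e' i) := fun i => by rw [hv]
    have hpuv : T.path u = T.path v := hpq'
    have heb : ∀ k, 1 ≤ e k ∧ e k ≤ h - 1 :=
      fun k => ⟨lzDig_lb m D g k, by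
        have := lzDig_ub m D g k hD1; rw [he]; omega⟩
    have heb' : ∀ k, 1 ≤ e' k ∧ e' k ≤ h - 1 :=
      fun k => ⟨lzDig_lb m D g' k, by
        have := lzDig_ub m D g' k hD1; rw [he']; omega⟩
    have hidxlt : ∀ i, lzIdx h m e i < σ := by
      intro i; rw [hσh]; exact lzIdx_lt h m e (fun k => (heb k).2) (by omega) i
    have hidxlt' : ∀ i, lzIdx h m e' i < σ := by
      intro i; rw [hσh]; exact lzIdx_lt h m e' (fun k => (heb' k).2) (by omega) i
    have hidxe : ∀ i, Even (lzIdx h m e i) := lzIdx_even h m e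
    have hidxe' : ∀ i, Even (lzIdx h m e' i) := lzIdx_even h m e'
    -- the first disagreement
    have hene : e k0.1 ≠ e' k0.1 := by
      rw [he, he', lzDig_at m D g k0.2, lzDig_at m D g' k0.2]
      intro hc
      exact hk0 (by
        have : g ⟨k0.1, k0.2⟩ = g' ⟨k0.1, k0.2⟩ := Fin.ext (by omega)
        simpa using this)
    set p₀ : ℕ := 2 * h + 2 * k0.1 + 1 with hp₀
    have hup₀ : u p₀ = A (2 * e k0.1) := by
      rw [hui, hp₀, lzIdx_digit h m e k0.2 (by omega)]
    have hvp₀ : v p₀ = A (2 * e' k0.1) := by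
      rw [hvi, hp₀, lzIdx_digit h m e' k0.2 (by omega)]
    have he2σ : ∀ k, 2 * e k < σ := fun k => by have := (heb k).2; omega
    have he2σ' : ∀ k, 2 * e' k < σ := fun k => by have := (heb' k).2; omega
    have hup₀v : u p₀ ≠ v p₀ := by
      rw [hup₀, hvp₀]
      intro hc
      have := hAinj (he2σ k0.1) (he2σ' k0.1) hc
      omega
    set E : Set ℕ := {q | u q = u p₀ ∧ v q = v p₀ ∧ u q ≠ v q} with hE
    have hp₀E : p₀ ∈ E := ⟨rfl, rfl, hup₀v⟩
    set P := sInf E with hP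
    have hPE : P ∈ E := Nat.sInf_mem ⟨p₀, hp₀E⟩
    have hPmin : ∀ i, i < P → i ∉ E := fun i hi => Nat.notMem_of_lt_sInf hi
    have hidxne : lzIdx h m e P ≠ lzIdx h m e' P := by
      intro hc
      exact hPE.2.2 (by rw [hui, hvi, hc])
    obtain ⟨kP, hkPm, hPform⟩ := lzIdx_ne_digitPos h m e e' hidxne
    set x := min (e kP) (e' kP) with hx
    have hx1 : 1 ≤ x := le_min (heb kP).1 (heb' kP).1
    have hxh : x ≤ h - 1 := le_trans (min_le_left _ _) (heb kP).2
    have hxσ : 2 * x + 1 < σ := by omega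
    have hx2σ : 2 * x < σ := by omega
    have huP : u P = A (2 * e kP) := by
      rw [hui, hPform, lzIdx_digit h m e hkPm (by omega)]
    have hvP : v P = A (2 * e' kP) := by
      rw [hvi, hPform, lzIdx_digit h m e' hkPm (by omega)]
    have hminP : min (u P) (v P) = A (2 * x) := by
      rw [huP, hvP, hAmin (he2σ kP) (he2σ' kP)]
      congr 1
      omega
    have hminp₀ : min (u p₀) (v p₀) = A (2 * x) := by
      rw [← hPE.1, ← hPE.2.1]
      exact hminP
    -- the two separating strings
    set s1 : ℕ → α := fun i => min (u i) (v i) with hs1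
    set s2 : ℕ → α := fun i => if i ∈ E then A (2 * x + 1) else min (u i) (v i) with hs2
    have hs1i : ∀ i, s1 i = min (u i) (v i) := fun i => by rw [hs1]
    have hs2mem : ∀ i, i ∈ E → s2 i = A (2 * x + 1) := fun i hi => by
      rw [hs2]; exact if_pos hi
    have hs2nmem : ∀ i, i ∉ E → s2 i = s1 i := fun i hi => by
      rw [hs2, hs1]; exact if_neg hi
    have hs1spec : ∀ i, ∃ c, c < σ ∧ Even c ∧ s1 i = A c := by
      intro i
      refine ⟨min (lzIdx h m e i) (lzIdx h m e' i),
        lt_of_le_of_lt (min_le_left _ _) (hidxlt i), ?_, ?_⟩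
      · rcases min_cases (lzIdx h m e i) (lzIdx h m e' i) with ⟨hmin, -⟩ | ⟨hmin, -⟩ <;>
          rw [hmin]
        · exact hidxe i
        · exact hidxe' i
      · rw [hs1i, hui, hvi]
        exact hAmin (hidxlt i) (hidxlt' i)
    -- s1 follows the same path
    have H1 : ∀ i j, pOrd u i j = pOrd v i j → pOrd s1 i j = pOrd u i j := by
      intro i j hij
      cases ho : pOrd u i j with
      | lt =>
        have h1 : u i < u j := pOrd_lt_iff.mp ho
        have h2 : v i < v j := pOrd_lt_iff.mp (hij.symm.trans ho)
        refine pOrd_lt_iff.mpr ?_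
        rw [hs1i, hs1i]
        exact lt_min ((min_le_left _ _).trans_lt h1) ((min_le_right _ _).trans_lt h2)
      | eq =>
        have h1 : u i = u j := pOrd_eq_iff.mp ho
        have h2 : v i = v j := pOrd_eq_iff.mp (hij.symm.trans ho)
        refine pOrd_eq_iff.mpr ?_
        rw [hs1i, hs1i, h1, h2]
      | gt =>
        have h1 : u j < u i := pOrd_gt_iff.mp ho
        have h2 : v j < v i := pOrd_gt_iff.mp (hij.symm.trans ho)
        refine pOrd_gt_iff.mpr ?_
        rw [hs1i, hs1i]
        rcases min_cases (u j) (v j) with ⟨hmin, hle⟩ | ⟨hmin, hle⟩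
        · rw [hmin]; exact lt_min h1 (hle.trans_lt h2)
        · rw [hmin]; exact lt_min (hle.trans h1) h2
    -- s2 follows the same path
    have H2 : ∀ i j, pOrd u i j = pOrd v i j → pOrd s2 i j = pOrd u i j := by
      intro i j hij
      by_cases hiE : i ∈ E <;> by_cases hjE : j ∈ E
      · have h1 : u i = u j := hiE.1.trans hjE.1.symm
        have hval : s2 i = s2 j := by rw [hs2mem i hiE, hs2mem j hjE]
        rw [pOrd_eq_iff.mpr h1]
        exact pOrd_eq_iff.mpr hval
      · obtain ⟨c, hcσ, hceven, hc⟩ := hs1spec j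
        cases ho : pOrd u i j with
        | lt =>
          have h1 : u i < u j := pOrd_lt_iff.mp ho
          have h2 : v i < v j := pOrd_lt_iff.mp (hij.symm.trans ho)
          rw [hiE.1] at h1
          rw [hiE.2.1] at h2
          have hlt : min (u p₀) (v p₀) < min (u j) (v j) :=
            lt_min ((min_le_left _ _).trans_lt h1) ((min_le_right _ _).trans_lt h2)
          rw [hminp₀, ← hs1i, hc] at hlt
          have hxc : 2 * x < c := (hAlt hx2σ hcσ).mp hlt
          have hx1c : 2 * x + 1 < c := by
            rcases hceven with ⟨r, hr⟩; omega
          refine pOrd_lt_iff.mpr ?_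
          rw [hs2mem i hiE, hs2nmem j hjE, hc]
          exact (hAlt hxσ hcσ).mpr hx1c
        | eq =>
          exfalso
          have h1 : u i = u j := pOrd_eq_iff.mp ho
          have h2 : v i = v j := pOrd_eq_iff.mp (hij.symm.trans ho)
          exact hjE ⟨by rw [← h1]; exact hiE.1, by rw [← h2]; exact hiE.2.1,
            by rw [← h1, ← h2]; exact hiE.2.2⟩
        | gt =>
          have h1 : u j < u i := pOrd_gt_iff.mp ho
          have h2 : v j < v i := pOrd_gt_iff.mp (hij.symm.trans ho)
          rw [hiE.1] at h1
          rw [hiE.2.1] at h2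
          have hlt : min (u j) (v j) < min (u p₀) (v p₀) := by
            rcases min_cases (u j) (v j) with ⟨hmin, hle⟩ | ⟨hmin, hle⟩
            · rw [hmin]; exact lt_min h1 (hle.trans_lt h2)
            · rw [hmin]; exact lt_min (hle.trans h1) h2
          rw [hminp₀, ← hs1i, hc] at hlt
          have hxc : c < 2 * x := (hAlt hcσ hx2σ).mp hlt
          refine pOrd_gt_iff.mpr ?_
          rw [hs2mem i hiE, hs2nmem j hjE, hc]
          exact (hAlt hcσ hxσ).mpr (by omega)
      · obtain ⟨c, hcσ, hceven, hc⟩ := hs1spec i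
        cases ho : pOrd u i j with
        | lt =>
          have h1 : u i < u j := pOrd_lt_iff.mp ho
          have h2 : v i < v j := pOrd_lt_iff.mp (hij.symm.trans ho)
          rw [hjE.1] at h1
          rw [hjE.2.1] at h2
          have hlt : min (u i) (v i) < min (u p₀) (v p₀) := by
            rcases min_cases (u i) (v i) with ⟨hmin, hle⟩ | ⟨hmin, hle⟩
            · rw [hmin]; exact lt_min h1 (hle.trans_lt h2)
            · rw [hmin]; exact lt_min (hle.trans h1) h2
          rw [hminp₀, ← hs1i, hc] at hlt
          have hxc : c < 2 * x := (hAlt hcσ hx2σ).mp hlt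
          refine pOrd_lt_iff.mpr ?_
          rw [hs2mem j hjE, hs2nmem i hiE, hc]
          exact (hAlt hcσ hxσ).mpr (by omega)
        | eq =>
          exfalso
          have h1 : u i = u j := pOrd_eq_iff.mp ho
          have h2 : v i = v j := pOrd_eq_iff.mp (hij.symm.trans ho)
          exact hiE ⟨by rw [h1]; exact hjE.1, by rw [h2]; exact hjE.2.1,
            by rw [h1, h2]; exact hjE.2.2⟩
        | gt =>
          have h1 : u j < u i := pOrd_gt_iff.mp ho
          have h2 : v j < v i := pOrd_gt_iff.mp (hij.symm.trans ho)
          rw [hjE.1] at h1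
          rw [hjE.2.1] at h2
          have hlt : min (u p₀) (v p₀) < min (u i) (v i) :=
            lt_min ((min_le_left _ _).trans_lt h1) ((min_le_right _ _).trans_lt h2)
          rw [hminp₀, ← hs1i, hc] at hlt
          have hxc : 2 * x < c := (hAlt hx2σ hcσ).mp hlt
          have hx1c : 2 * x + 1 < c := by
            rcases hceven with ⟨r, hr⟩; omega
          refine pOrd_gt_iff.mpr ?_
          rw [hs2mem j hjE, hs2nmem i hiE, hc]
          exact (hAlt hxσ hcσ).mpr hx1c
      · rw [pOrd_congr (hs2nmem i hiE) (hs2nmem j hjE)]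
        exact H1 i j hij
    have hpath1 : T.path s1 = T.path u := path_congr_of_pOrd T u v s1 H1 hpuv
    have hpath2 : T.path s2 = T.path u := path_congr_of_pOrd T u v s2 H2 hpuv
    have hrange1 : ∀ i, 1 ≤ i → i ≤ n → s1 i ∈ Set.range a := by
      intro i _ _
      obtain ⟨c, -, -, hc⟩ := hs1spec i
      rw [hc]; exact hArange c
    have hrange2 : ∀ i, 1 ≤ i → i ≤ n → s2 i ∈ Set.range a := by
      intro i _ _
      by_cases hiE : i ∈ E
      · rw [hs2mem i hiE]; exact hArange _
      · rw [hs2nmem i hiE]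
        obtain ⟨c, -, -, hc⟩ := hs1spec i
        rw [hc]; exact hArange c
    have hlz : lzList s1 n 0 = lzList s2 n 0 :=
      hfinds s1 s2 hrange1 hrange2 (hpath1.trans hpath2.symm)
    -- now derive the contradiction
    have hP1 : 1 ≤ P := by omega
    have hPn : P + 1 ≤ n := by omega
    have hfreshP : ∀ i, i < P → s2 i ≠ s2 P := by
      intro i hi hcon
      obtain ⟨c, hcσ, hceven, hcv⟩ := hs1spec i
      rw [hs2nmem i (hPmin i hi), hcv, hs2mem P hPE] at hcon
      have := hAinj hcσ hxσ hcon
      rcases hceven with ⟨r, hr⟩; omega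
    have hmatchP : ∃ s, 1 ≤ s ∧ s + 1 ≤ P ∧ s1 s = s1 P ∧ s1 (s + 1) = s1 (P + 1) := by
      refine ⟨2 * x, by omega, by omega, ?_, ?_⟩
      · have hidx1 : lzIdx h m e (2 * x) = 2 * x := lzIdx_prefix_even h m e hx1 hxh
        have hidx2 : lzIdx h m e' (2 * x) = 2 * x := lzIdx_prefix_even h m e' hx1 hxh
        have hval : s1 (2 * x) = A (2 * x) := by
          rw [hs1i, hui, hvi, hidx1, hidx2, min_self]
        rw [hval, hs1i, hminP]
      · have hidx1 : lzIdx h m e (2 * x + 1) = 0 := lzIdx_prefix_odd h m e (by omega)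
        have hidx2 : lzIdx h m e' (2 * x + 1) = 0 := lzIdx_prefix_odd h m e' (by omega)
        have hidx3 : lzIdx h m e (P + 1) = 0 := by
          have : P + 1 = 2 * h + 2 * kP + 2 := by omega
          rw [this]; exact lzIdx_after_digit h m e hkPm (by omega)
        have hidx4 : lzIdx h m e' (P + 1) = 0 := by
          have : P + 1 = 2 * h + 2 * kP + 2 := by omega
          rw [this]; exact lzIdx_after_digit h m e' hkPm (by omega)
        rw [hs1i, hs1i, hui, hvi, hui, hvi, hidx1, hidx2, hidx3, hidx4]
    exact lz_differs s1 s2 n P hP1 hPn (fun i hi => hs2nmem i (hPmin i hi))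
      hfreshP hmatchP hlz
  -- counting: the family injects into the set of paths
  have hcard : D ^ m ≤ 3 ^ T.height := by
    have hinj2 : Function.Injective
        (fun g : Fin m → Fin D =>
          (⟨T.path (fun i => A (lzIdx h m (lzDig m D g) i)),
            path_mem_allPaths T _⟩ : {l // l ∈ allPaths T})) := by
      intro g g' hgg'
      exact hinj (congrArg Subtype.val hgg')
    calc D ^ m = Fintype.card (Fin m → Fin D) := by
          rw [Fintype.card_fun, Fintype.card_fin, Fintype.card_fin]
      _ ≤ Fintype.card {l // l ∈ allPaths T} := Fintype.card_le_of_injective _ hinj2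
      _ = (allPaths T).card := Fintype.card_coe _
      _ ≤ 3 ^ T.height := card_allPaths_le T
  -- final real-number computation
  have hcastD : ((σ : ℝ) / 2 - 1) = (D : ℝ) := by
    have hσR : (σ : ℝ) = 2 * (h : ℝ) := by exact_mod_cast congrArg Nat.cast hσh
    rw [hσR, hD]
    have h1h : (1:ℕ) ≤ h := by omega
    push_cast [Nat.cast_sub h1h]
    ring
  rw [hcastD]
  have hDm_pos : (0:ℝ) < (D:ℝ) ^ m := by
    have : (1:ℝ) ≤ (D:ℝ) := by exact_mod_cast hD1
    positivity
  calc (m : ℝ) * Real.logb 3 (D:ℝ) = Real.logb 3 ((D:ℝ) ^ m) :=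
        (Real.logb_pow 3 (D:ℝ) m).symm
    _ ≤ Real.logb 3 ((3:ℝ) ^ T.height) := by
        refine (Real.logb_le_logb (by norm_num) hDm_pos (by positivity)).mpr ?_
        exact_mod_cast hcard
    _ = (T.height : ℝ) := by
        rw [Real.logb_pow, Real.logb_self_eq_one (by norm_num)]
        ring
end

section
/- Suppose a decision tree processing strings of length n has basic height k. Then it is equivalent to a decision tree (processing strings of length n) of height at most k + n. -/
namespace DecisionTree

def merge (r : ℕ → ℕ) (i j : ℕ) : ℕ → ℕ := fun x => if r x = r i then r j else r x

def trans (r : ℕ → ℕ) : DecisionTree → DecisionTree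
  | .leaf => .leaf
  | .node i j l e g =>
    if r i = r j then trans r e
    else .node i j (trans r l) (trans (merge r i j) e) (trans r g)

def Respects {α : Type*} (t : ℕ → α) (r : ℕ → ℕ) : Prop := ∀ x y, r x = r y → t x = t y

lemma respects_merge {α : Type*} {t : ℕ → α} {r : ℕ → ℕ} {i j : ℕ}
    (h : Respects t r) (hij : t i = t j) : Respects t (merge r i j) := by
  intro x y hxy
  unfold merge at hxy
  split_ifs at hxy with h1 h2 h2
  · exact (h x i h1).trans (h i y h2.symm)
  · exact (h x i h1).trans (hij.trans (h j y hxy))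
  · exact (h x j hxy).trans (hij.symm.trans (h i y h2.symm))
  · exact h x y hxy

lemma trans_WF {n : ℕ} (r : ℕ → ℕ) (T : DecisionTree) (h : T.WF n) : (trans r T).WF n := by
  induction T generalizing r with
  | leaf => trivial
  | node i j l e g ihl ihe ihg =>
    obtain ⟨h1, h2, h3, h4, hl, he, hg⟩ := h
    unfold trans
    split_ifs with hr
    · exact ihe r he
    · exact ⟨h1, h2, h3, h4, ihl r hl, ihe _ he, ihg r hg⟩

lemma path_lt {α : Type*} [LinearOrder α] {t : ℕ → α} {i j : ℕ} {l e g : DecisionTree}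
    (h : t i < t j) : (node i j l e g).path t = .lt :: l.path t := by simp [path, h]

lemma path_eq {α : Type*} [LinearOrder α] {t : ℕ → α} {i j : ℕ} {l e g : DecisionTree}
    (h : t i = t j) : (node i j l e g).path t = .eq :: e.path t := by simp [path, h]

lemma path_gt {α : Type*} [LinearOrder α] {t : ℕ → α} {i j : ℕ} {l e g : DecisionTree}
    (h : t j < t i) : (node i j l e g).path t = .gt :: g.path t := by
  simp [path, not_lt_of_gt h, h.ne']

set_option linter.unnecessarySeqFocus false in
lemma path_trans_iff {α : Type*} [LinearOrder α] (T : DecisionTree) (r : ℕ → ℕ)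
    (t₁ t₂ : ℕ → α) (h₁ : Respects t₁ r) (h₂ : Respects t₂ r) :
    T.path t₁ = T.path t₂ ↔ (trans r T).path t₁ = (trans r T).path t₂ := by
  induction T generalizing r with
  | leaf => simp [trans]
  | node i j l e g ihl ihe ihg =>
    unfold trans
    split_ifs with hr
    · rw [path_eq (h₁ i j hr), path_eq (h₂ i j hr)]
      simpa using ihe r h₁ h₂
    · rcases lt_trichotomy (t₁ i) (t₁ j) with c₁ | c₁ | c₁ <;>
      rcases lt_trichotomy (t₂ i) (t₂ j) with c₂ | c₂ | c₂
      all_goals first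
        | (rw [path_lt c₁, path_lt c₂, path_lt c₁, path_lt c₂]
           simpa using ihl r h₁ h₂)
        | (rw [path_eq c₁, path_eq c₂, path_eq c₁, path_eq c₂]
           simpa using ihe (merge r i j) (respects_merge h₁ c₁) (respects_merge h₂ c₂))
        | (rw [path_gt c₁, path_gt c₂, path_gt c₁, path_gt c₂]
           simpa using ihg r h₁ h₂)
        | ((first | rw [path_lt c₁, path_lt c₁] | rw [path_eq c₁, path_eq c₁]
                  | rw [path_gt c₁, path_gt c₁]) <;>
           (first | rw [path_lt c₂, path_lt c₂] | rw [path_eq c₂, path_eq c₂]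
                  | rw [path_gt c₂, path_gt c₂]) <;> simp)

lemma trans_height {n : ℕ} (T : DecisionTree) (r : ℕ → ℕ) (h : T.WF n) :
    (trans r T).height ≤ T.basicHeight + ((Finset.Icc 1 n).image r).card := by
  induction T generalizing r with
  | leaf => simp [trans, height]
  | node i j l e g ihl ihe ihg =>
    obtain ⟨h1, h2, h3, h4, hl, he, hg⟩ := h
    have hiIcc : i ∈ Finset.Icc 1 n := Finset.mem_Icc.mpr ⟨h1, h2⟩
    have hjIcc : j ∈ Finset.Icc 1 n := Finset.mem_Icc.mpr ⟨h3, h4⟩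
    unfold trans
    split_ifs with hr
    · have := ihe r he
      have hle : e.basicHeight ≤ (node i j l e g).basicHeight := le_max_right _ _
      omega
    · have hcard : ((Finset.Icc 1 n).image (merge r i j)).card + 1 ≤
          ((Finset.Icc 1 n).image r).card := by
        have hsub : (Finset.Icc 1 n).image (merge r i j) ⊆
            ((Finset.Icc 1 n).image r).erase (r i) := by
          intro y hy
          obtain ⟨x, hx, hxy⟩ := Finset.mem_image.mp hy
          unfold merge at hxy
          rw [Finset.mem_erase]
          split_ifs at hxy with hc
          · exact ⟨hxy ▸ (Ne.symm hr), hxy ▸ Finset.mem_image_of_mem r hjIcc⟩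
          · exact ⟨hxy ▸ hc, hxy ▸ Finset.mem_image_of_mem r hx⟩
        have h2' : (((Finset.Icc 1 n).image r).erase (r i)).card + 1 =
            ((Finset.Icc 1 n).image r).card :=
          Finset.card_erase_add_one (Finset.mem_image_of_mem r hiIcc)
        have := Finset.card_le_card hsub
        omega
      have Hl := ihl r hl
      have He := ihe (merge r i j) he
      have Hg := ihg r hg
      simp only [height, basicHeight] at *
      omega

end DecisionTree

/-- Two decision trees processing strings of length `n` are equivalent: they
induce the same partition of input strings into leaf-classes, i.e. for each
reachable leaf of one tree there is a leaf of the other reached by exactly the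
same strings. -/
def TreeEquiv (T T' : DecisionTree) : Prop :=
  ∀ (α : Type) [LinearOrder α] (t₁ t₂ : ℕ → α),
    T.path t₁ = T.path t₂ ↔ T'.path t₁ = T'.path t₂

/-- A decision tree of basic height `k` processing strings of length `n` is
equivalent to a decision tree of height at most `k + n`. -/
theorem basic_height_to_height (n k : ℕ) (T : DecisionTree)
    (hwf : T.WF n) (hbh : T.basicHeight = k) :
    ∃ T' : DecisionTree, T'.WF n ∧ TreeEquiv T T' ∧ T'.height ≤ k + n := by
  refine ⟨T.trans id, DecisionTree.trans_WF id T hwf, ?_, ?_⟩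
  · intro α _ t₁ t₂
    exact DecisionTree.path_trans_iff T id t₁ t₂
      (fun x y h => by simpa using congrArg t₁ h)
      (fun x y h => by simpa using congrArg t₂ h)
  · have := DecisionTree.trans_height T id hwf
    simpa [hbh, Finset.image_id, Nat.card_Icc] using this
end

section
/- For any positive integers n and p, there is a decision tree that finds all p-periodic runs in strings of length n and has basic height at most 2⌈n/p⌉. -/
/-- `t[i..j]` is a `p`-periodic run of `t[1..n]`: a run of length at least `2p`
having `p` as a (not necessarily minimal) period. -/
def IsPPeriodicRun {α : Type*} (t : ℕ → α) (n p i j : ℕ) : Prop :=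
  IsRun t n i j ∧ 2 * p ≤ j + 1 - i ∧ IsPeriodOf t i j p

/-- The decision tree `T` finds all `p`-periodic runs in strings of length `n`. -/
def FindsAllPPeriodicRuns (n p : ℕ) (T : DecisionTree) : Prop :=
  ∀ (α : Type) [LinearOrder α] (t₁ t₂ : ℕ → α),
    T.path t₁ = T.path t₂ →
      ∀ i j, (IsPPeriodicRun t₁ n p i j ↔ IsPPeriodicRun t₂ n p i j)

section PartA

variable {α : Type*}

/-- Pointwise periodicity on a 1-indexed window `[i..j]`. -/
private def Pw (t : ℕ → α) (i j q : ℕ) : Prop :=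
  ∀ k, i ≤ k → k + q ≤ j → t (k + q) = t k

private lemma isPeriodOf_len (t : ℕ → α) {i j : ℕ} (hij : i ≤ j) (hi : 1 ≤ i) :
    IsPeriodOf t i j (j + 1 - i) := by
  refine ⟨by omega, le_rfl, fun k hk hk2 => ?_⟩
  exact absurd hk2 (by omega)

private lemma periods_nonempty (t : ℕ → α) {i j : ℕ} (hij : i ≤ j) (hi : 1 ≤ i) :
    {q | IsPeriodOf t i j q}.Nonempty :=
  ⟨_, isPeriodOf_len t hij hi⟩

private lemma minPeriod_mem (t : ℕ → α) {i j : ℕ} (hij : i ≤ j) (hi : 1 ≤ i) :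
    IsPeriodOf t i j (minPeriod t i j) :=
  Nat.sInf_mem (periods_nonempty t hij hi)

private lemma minPeriod_le (t : ℕ → α) {i j q : ℕ} (h : IsPeriodOf t i j q) :
    minPeriod t i j ≤ q :=
  Nat.sInf_le h

/-- If `q` is a pointwise period and `q ∣ r` then `r` is a pointwise period. -/
private lemma pw_of_dvd (t : ℕ → α) {i j q r : ℕ}
    (hq : Pw t i j q) (hd : q ∣ r) : Pw t i j r := by
  obtain ⟨s, rfl⟩ := hd
  induction s with
  | zero => intro k hk hk2; simp
  | succ s ih =>
    intro k hk hk2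
    have hms : q * (s + 1) = q * s + q := by ring
    have h1 : t (k + q * s + q) = t (k + q * s) := hq (k + q * s) (by omega) (by omega)
    have h2 : t (k + q * s) = t k := ih k hk (by omega)
    have he : k + q * (s + 1) = k + q * s + q := by ring
    rw [he, h1, h2]

/-- Fine and Wilf's periodicity lemma (pointwise form). -/
private lemma fine_wilf (t : ℕ → α) (i j : ℕ) :
    ∀ N a b, a + b ≤ N → 0 < a → 0 < b → Pw t i j a → Pw t i j b →
      i + a + b ≤ j + 1 → Pw t i j (Nat.gcd a b) := by
  intro N
  induction N with
  | zero => intro a b h ha; omega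
  | succ N ih =>
    intro a b hab ha hb hpa hpb hlen
    rcases le_total a b with hle | hle
    · rcases eq_or_lt_of_le hle with rfl | hlt
      · rwa [Nat.gcd_self]
      · -- b - a is a pointwise period
        have hpb' : Pw t i j (b - a) := by
          intro k hk hk2
          by_cases hcase : k + b ≤ j
          · have h1 : t (k + (b - a) + a) = t (k + (b - a)) := hpa _ (by omega) (by omega)
            have h2 : t (k + b) = t k := hpb k hk hcase
            have he : k + (b - a) + a = k + b := by omega
            rw [he] at h1
            rw [← h1, h2]
          · have hka : a ≤ k := by omega
            have h1 : t (k - a + a) = t (k - a) := hpa _ (by omega) (by omega)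
            have h2 : t (k - a + b) = t (k - a) := hpb _ (by omega) (by omega)
            have he1 : k - a + a = k := by omega
            have he2 : k - a + b = k + (b - a) := by omega
            rw [he1] at h1
            rw [he2] at h2
            rw [h2, ← h1]
        have hg : Nat.gcd a (b - a) = Nat.gcd a b := Nat.gcd_sub_self_right hle
        have := ih a (b - a) (by omega) ha (by omega) hpa hpb' (by omega)
        rwa [hg] at this
    · rcases eq_or_lt_of_le hle with rfl | hlt
      · rwa [Nat.gcd_self]
      · have hpa' : Pw t i j (a - b) := by
          intro k hk hk2
          by_cases hcase : k + a ≤ j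
          · have h1 : t (k + (a - b) + b) = t (k + (a - b)) := hpb _ (by omega) (by omega)
            have h2 : t (k + a) = t k := hpa k hk hcase
            have he : k + (a - b) + b = k + a := by omega
            rw [he] at h1
            rw [← h1, h2]
          · have hka : b ≤ k := by omega
            have h1 : t (k - b + b) = t (k - b) := hpb _ (by omega) (by omega)
            have h2 : t (k - b + a) = t (k - b) := hpa _ (by omega) (by omega)
            have he1 : k - b + b = k := by omega
            have he2 : k - b + a = k + (a - b) := by omega
            rw [he1] at h1
            rw [he2] at h2
            rw [h2, ← h1]
        have hg : Nat.gcd (a - b) b = Nat.gcd a b := Nat.gcd_sub_self_left hle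
        have := ih (a - b) b (by omega) (by omega) hb hpa' hpb (by omega)
        rwa [hg] at this

end PartA
/-- `t[x..y+p]` is a maximal `p`-periodic segment of length at least `2p`,
expressed via the pattern `b k = (t (k+p) = t k)`. -/
def MaxRunP (n p : ℕ) (b : ℕ → Prop) (x y : ℕ) : Prop :=
  1 ≤ x ∧ x + p ≤ y + 1 ∧ y + p ≤ n ∧ (∀ k, x ≤ k → k ≤ y → b k) ∧
  (1 < x → ¬ b (x - 1)) ∧ (y + p < n → ¬ b (y + 1))

section Char

variable {α : Type*}

private lemma gcd_eq_of_min {t : ℕ → α} {i j q r : ℕ}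
    (hij : i ≤ j) (hi : 1 ≤ i)
    (hqmin : q = minPeriod t i j) (hq : IsPeriodOf t i j q) (hr : IsPeriodOf t i j r)
    (hlen : i + q + r ≤ j + 1) : q ∣ r := by
  have hq1 : 1 ≤ q := hq.1
  have hr1 : 1 ≤ r := hr.1
  have hgcdpw : Pw t i j (Nat.gcd q r) :=
    fine_wilf t i j (q + r) q r le_rfl (by omega) (by omega) hq.2.2 hr.2.2 hlen
  have hgcd1 : 0 < Nat.gcd q r := Nat.gcd_pos_of_pos_left _ (by omega)
  have hgcdper : IsPeriodOf t i j (Nat.gcd q r) :=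
    ⟨hgcd1, le_trans (Nat.le_of_dvd (by omega) (Nat.gcd_dvd_left _ _)) hq.2.1, hgcdpw⟩
  have h1 : q ≤ Nat.gcd q r := by
    have := minPeriod_le t hgcdper
    rwa [← hqmin] at this
  have h2 : Nat.gcd q r = q :=
    le_antisymm (Nat.le_of_dvd (by omega) (Nat.gcd_dvd_left _ _)) h1
  exact h2 ▸ Nat.gcd_dvd_right _ _

/-- Characterization: `p`-periodic runs are exactly the maximal `p`-periodic
segments of length at least `2p`. -/
private lemma pprun_iff_maxrun (t : ℕ → α) (n p i j : ℕ) (hp : 0 < p) :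
    IsPPeriodicRun t n p i j ↔
      p ≤ j ∧ MaxRunP n p (fun k => t (k + p) = t k) i (j - p) := by
  have hcong : ∀ {u v : ℕ}, u = v → t u = t v := fun h => by rw [h]
  constructor
  · rintro ⟨⟨hi1, hij, hjn, hexp, hleft, hright⟩, h2p, hper⟩
    obtain ⟨hp1, hple, hpw⟩ := hper
    have hij1 : i ≤ j + 1 := by omega
    have h2p' : i + 2 * p ≤ j + 1 := by omega
    have hple' : i + p ≤ j + 1 := by omega
    have hpj : p ≤ j := by omega
    have hqmem := minPeriod_mem t hij hi1
    set q := minPeriod t i j with hqdef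
    obtain ⟨hq1, hqle, hqpw⟩ := hqmem
    have hqle' : i + q ≤ j + 1 := by omega
    have hqp : q ≤ p := minPeriod_le t ⟨hp1, hple, hpw⟩
    refine ⟨hpj, by omega, by omega, by omega, fun k hk hk2 => hpw k hk (by omega), ?_, ?_⟩
    · -- left maximality
      intro hi2 heq
      have hperext : IsPeriodOf t (i - 1) j p := by
        refine ⟨hp1, by omega, fun k hk hk2 => ?_⟩
        rcases eq_or_lt_of_le hk with h | h
        · have : k = i - 1 := h.symm
          subst this
          simpa using heq
        · exact hpw k (by omega) hk2
      have hq'mem := minPeriod_mem t (show i - 1 ≤ j by omega) (by omega)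
      set q' := minPeriod t (i - 1) j with hq'def
      obtain ⟨hq'1, hq'le, hq'pw⟩ := hq'mem
      have hq'p : q' ≤ p := minPeriod_le t hperext
      have hq'per : IsPeriodOf t i j q' :=
        ⟨hq'1, by omega, fun k hk hk2 => hq'pw k (by omega) hk2⟩
      have hqq' : q ≤ q' := minPeriod_le t hq'per
      have hlt : q < q' := hleft hi2
      have hdvd : q ∣ q' :=
        gcd_eq_of_min hij hi1 hqdef ⟨hq1, hqle, hqpw⟩ hq'per (by omega)
      have hqext : IsPeriodOf t (i - 1) j q := by
        refine ⟨hq1, by omega, fun k hk hk2 => ?_⟩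
        rcases eq_or_lt_of_le hk with h | h
        · have hki : k = i - 1 := h.symm
          subst hki
          have e1 : t (i - 1 + q') = t (i - 1) := hq'pw (i - 1) le_rfl (by omega)
          have e2 : t (i - 1 + q + (q' - q)) = t (i - 1 + q) :=
            pw_of_dvd t hqpw (Nat.dvd_sub hdvd dvd_rfl) (i - 1 + q) (by omega) (by omega)
          calc t (i - 1 + q) = t (i - 1 + q + (q' - q)) := e2.symm
            _ = t (i - 1 + q') := hcong (by omega)
            _ = t (i - 1) := e1
        · exact hqpw k (by omega) hk2
      have : q' ≤ q := minPeriod_le t hqext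
      omega
    · -- right maximality
      intro hjn2 heq
      have heq' : t (j + 1) = t (j - p + 1) := by
        calc t (j + 1) = t (j - p + 1 + p) := hcong (by omega)
          _ = t (j - p + 1) := heq
      have hperext : IsPeriodOf t i (j + 1) p := by
        refine ⟨hp1, by omega, fun k hk hk2 => ?_⟩
        rcases eq_or_lt_of_le hk2 with h | h
        · have hki : k = j - p + 1 := by omega
          subst hki
          calc t (j - p + 1 + p) = t (j + 1) := hcong (by omega)
            _ = t (j - p + 1) := heq'
        · exact hpw k hk (by omega)
      have hq'mem := minPeriod_mem t (show i ≤ j + 1 by omega) hi1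
      set q'' := minPeriod t i (j + 1) with hq''def
      obtain ⟨hq''1, hq''le, hq''pw⟩ := hq'mem
      have hq''p : q'' ≤ p := minPeriod_le t hperext
      have hq''per : IsPeriodOf t i j q'' :=
        ⟨hq''1, by omega, fun k hk hk2 => hq''pw k hk (by omega)⟩
      have hqq'' : q ≤ q'' := minPeriod_le t hq''per
      have hlt : q < q'' := hright (by omega)
      have hdvd : q ∣ q'' :=
        gcd_eq_of_min hij hi1 hqdef ⟨hq1, hqle, hqpw⟩ hq''per (by omega)
      have hqext : IsPeriodOf t i (j + 1) q := by
        refine ⟨hq1, by omega, fun k hk hk2 => ?_⟩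
        rcases eq_or_lt_of_le hk2 with h | h
        · have hki : k = j + 1 - q := by omega
          subst hki
          have e1 : t (j + 1 - q'' + q'') = t (j + 1 - q'') :=
            hq''pw (j + 1 - q'') (by omega) (by omega)
          have e2 : t (j + 1 - q'' + (q'' - q)) = t (j + 1 - q'') :=
            pw_of_dvd t hqpw (Nat.dvd_sub hdvd dvd_rfl) (j + 1 - q'') (by omega) (by omega)
          calc t (j + 1 - q + q) = t (j + 1 - q'' + q'') := hcong (by omega)
            _ = t (j + 1 - q'') := e1
            _ = t (j + 1 - q'' + (q'' - q)) := e2.symm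
            _ = t (j + 1 - q) := hcong (by omega)
        · exact hqpw k hk (by omega)
      have : q'' ≤ q := minPeriod_le t hqext
      omega
  · rintro ⟨hpj, hx1, hlen, hyn, htrue, hbl, hbr⟩
    have h2p : i + 2 * p ≤ j + 1 := by omega
    have hjn : j ≤ n := by omega
    have hij : i ≤ j := by omega
    have hpw : Pw t i j p := fun k hk hk2 => htrue k hk (by omega)
    have hper : IsPeriodOf t i j p := ⟨hp, by omega, hpw⟩
    have hqmem := minPeriod_mem t hij hx1
    set q := minPeriod t i j with hqdef
    obtain ⟨hq1, hqle, hqpw⟩ := hqmem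
    have hqp : q ≤ p := minPeriod_le t hper
    have hdvd : q ∣ p := gcd_eq_of_min hij hx1 hqdef ⟨hq1, hqle, hqpw⟩ hper (by omega)
    refine ⟨⟨hx1, hij, hjn, by omega, ?_, ?_⟩, by omega, hper⟩
    · -- left: minPeriod strictly increases
      intro hi2
      by_contra hnot
      push_neg at hnot
      have hq'mem := minPeriod_mem t (show i - 1 ≤ j by omega) (by omega)
      set q' := minPeriod t (i - 1) j with hq'def
      obtain ⟨hq'1, hq'le, hq'pw⟩ := hq'mem
      have hq'q : q' ≤ q := hnot
      have hq'per : IsPeriodOf t i j q' :=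
        ⟨hq'1, by omega, fun k hk hk2 => hq'pw k (by omega) hk2⟩
      have hqq' : q ≤ q' := minPeriod_le t hq'per
      have hq'eq : q' = q := by omega
      have e1 : t (i - 1 + q) = t (i - 1) := by
        have := hq'pw (i - 1) le_rfl (by omega)
        rwa [hq'eq] at this
      have e2 : t (i - 1 + q + (p - q)) = t (i - 1 + q) :=
        pw_of_dvd t hqpw (Nat.dvd_sub hdvd dvd_rfl) (i - 1 + q) (by omega) (by omega)
      have : t (i - 1 + p) = t (i - 1) := by
        calc t (i - 1 + p) = t (i - 1 + q + (p - q)) := hcong (by omega)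
          _ = t (i - 1 + q) := e2
          _ = t (i - 1) := e1
      exact hbl hi2 this
    · -- right: minPeriod strictly increases
      intro hjn2
      by_contra hnot
      push_neg at hnot
      have hq'mem := minPeriod_mem t (show i ≤ j + 1 by omega) hx1
      set q'' := minPeriod t i (j + 1) with hq''def
      obtain ⟨hq''1, hq''le, hq''pw⟩ := hq'mem
      have hq''q : q'' ≤ q := hnot
      have hq''per : IsPeriodOf t i j q'' :=
        ⟨hq''1, by omega, fun k hk hk2 => hq''pw k hk (by omega)⟩
      have hqq'' : q ≤ q'' := minPeriod_le t hq''per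
      have hq''eq : q'' = q := by omega
      have e1 : t (j + 1) = t (j + 1 - q) := by
        have := hq''pw (j + 1 - q'') (by omega) (by omega)
        rw [hq''eq] at this
        calc t (j + 1) = t (j + 1 - q + q) := hcong (by omega)
          _ = t (j + 1 - q) := this
      have e2 : t (j - p + 1 + (p - q)) = t (j - p + 1) :=
        pw_of_dvd t hqpw (Nat.dvd_sub hdvd dvd_rfl) (j - p + 1) (by omega) (by omega)
      have : t (j - p + 1 + p) = t (j - p + 1) := by
        calc t (j - p + 1 + p) = t (j + 1) := hcong (by omega)
          _ = t (j + 1 - q) := e1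
          _ = t (j - p + 1 + (p - q)) := hcong (by omega)
          _ = t (j - p + 1) := e2
      exact hbr (by omega) this
  
end Char
/-! ### The decision tree: scanning anchors (multiples of `p`) and expanding. -/

/-- Right expansion phase: query positions `e, e+1, ...` until a mismatch
(then continue with `g e`) or the end of the pattern. -/
def rexpT (n p : ℕ) (g : ℕ → DecisionTree) : ℕ → ℕ → DecisionTree
  | 0, _ => .leaf
  | d + 1, e =>
    if n - p < e then .leaf
    else .node e (e + p) (g e) (rexpT n p g d (e + 1)) (g e)

/-- Left expansion phase: query positions `k, k-1, ...` down to `lo + 1`,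
then continue with `r` (the right expansion). -/
def lexpT (p lo : ℕ) (r : DecisionTree) : ℕ → DecisionTree
  | 0 => r
  | k + 1 => if k + 1 ≤ lo then r else .node (k + 1) (k + 1 + p) r (lexpT p lo r k) r

/-- Anchor scanning phase. -/
def scanT (n p : ℕ) : ℕ → ℕ → ℕ → DecisionTree
  | 0, _, _ => .leaf
  | c + 1, m, lo =>
    if n - p < m * p then .leaf
    else
      .node (m * p) (m * p + p)
        (scanT n p c (m + 1) (m * p))
        (lexpT p lo
          (rexpT n p (fun e => scanT n p c (e / p + 1) e) (n + 2) (m * p + 1))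
          (m * p - 1))
        (scanT n p c (m + 1) (m * p))

/-- Decompose equality of computation paths at a node whose `<`- and
`>`-children coincide. -/
lemma path_node_same {α : Type*} [LinearOrder α] {i j : ℕ} {l e : DecisionTree}
    {t₁ t₂ : ℕ → α}
    (h : (DecisionTree.node i j l e l).path t₁ = (DecisionTree.node i j l e l).path t₂) :
    (t₁ j = t₁ i ∧ t₂ j = t₂ i ∧ e.path t₁ = e.path t₂) ∨
    (¬ t₁ j = t₁ i ∧ ¬ t₂ j = t₂ i ∧ l.path t₁ = l.path t₂) := by
  unfold DecisionTree.path at h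
  split_ifs at h <;>
    simp only [List.cons.injEq, reduceCtorEq, false_and, true_and, and_false] at h <;>
    first
      | exact h.elim
      | exact Or.inl ⟨‹t₁ i = t₁ j›.symm, ‹t₂ i = t₂ j›.symm, h⟩
      | exact Or.inr ⟨ne_of_gt ‹t₁ i < t₁ j›, ne_of_gt ‹t₂ i < t₂ j›, h⟩
      | exact Or.inr ⟨fun hc => ‹¬ t₁ i = t₁ j› hc.symm, fun hc => ‹¬ t₂ i = t₂ j› hc.symm, h⟩

/-- There is a multiple of `p` in any window of `p` consecutive positions. -/
lemma exists_anchor {p : ℕ} (hp : 0 < p) {x y : ℕ} (h1 : 1 ≤ x) (h2 : x + p ≤ y + 1) :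
    ∃ a, p ∣ a ∧ x ≤ a ∧ a ≤ y := by
  refine ⟨(x + p - 1) / p * p, ⟨(x + p - 1) / p, mul_comm _ _⟩, ?_, ?_⟩
  · have hdm := Nat.div_add_mod (x + p - 1) p
    have hmlt : (x + p - 1) % p < p := Nat.mod_lt _ hp
    have hmc : (x + p - 1) / p * p = p * ((x + p - 1) / p) := mul_comm _ _
    omega
  · have := Nat.div_mul_le_self (x + p - 1) p
    omega

lemma anchor_le {p a m : ℕ} (hd : p ∣ a) (h : a < m * p) : a ≤ (m - 1) * p := by
  obtain ⟨c, rfl⟩ := hd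
  have hcm : c < m := by
    by_contra hc
    push_neg at hc
    have : p * m ≤ p * c := Nat.mul_le_mul_left p hc
    have : m * p = p * m := mul_comm _ _
    omega
  have h1 : p * c ≤ p * (m - 1) := Nat.mul_le_mul_left p (by omega)
  have h2 : p * (m - 1) = (m - 1) * p := mul_comm _ _
  omega

lemma anchor_ge {p a m : ℕ} (hp : 0 < p) (hd : p ∣ a) (h : (m - 1) * p < a) : m * p ≤ a := by
  obtain ⟨c, rfl⟩ := hd
  have hcm : m - 1 < c := by
    by_contra hc
    push_neg at hc
    have : p * c ≤ p * (m - 1) := Nat.mul_le_mul_left p hc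
    have : (m - 1) * p = p * (m - 1) := mul_comm _ _
    omega
  have h1 : p * m ≤ p * c := Nat.mul_le_mul_left p (by omega)
  have h2 : p * m = m * p := mul_comm _ _
  omega
/-! ### Positional lemmas about maximal runs and the scanning invariants. -/

/-- Any maximal run is confined below the current barrier `lo`. -/
lemma maxrun_le {n p : ℕ} (hp : 0 < p) {b : ℕ → Prop} {m lo x y : ℕ}
    (h2 : (m - 1) * p ≤ lo) (hbar : lo = 0 ∨ ¬ b lo)
    (h : MaxRunP n p b x y) (hy : y ≤ m * p) (hcase : y < m * p ∨ ¬ b (m * p)) :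
    y ≤ lo := by
  obtain ⟨hx1, hlen, hyn, htr, hbl, hbr⟩ := h
  obtain ⟨a, hda, hax, hay⟩ := exists_anchor hp hx1 hlen
  have hamp : a < m * p := by
    rcases lt_or_eq_of_le (le_trans hay hy) with hlt | heq
    · exact hlt
    · rcases hcase with hc | hc
      · omega
      · exact absurd (heq ▸ htr a hax hay) hc
  have halo : a ≤ lo := le_trans (anchor_le hda hamp) h2
  by_contra hgt
  push_neg at hgt
  have hblo : b lo := htr lo (by omega) (by omega)
  rcases hbar with h0 | hnb
  · omega
  · exact hnb hblo

/-- Trichotomy: after expanding around an anchor, every maximal run either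
lies below the old barrier or coincides with the discovered run. -/
lemma maxrun_tri {n p : ℕ} (hp : 0 < p) {b : ℕ → Prop} {m lo x e x' y' : ℕ}
    (hml : (m - 1) * p ≤ lo) (hlox : lo < x) (hxmp : x ≤ m * p) (hx1 : 1 ≤ x)
    (hbarlo : lo = 0 ∨ ¬ b lo)
    (hbarx : x = 1 ∨ ¬ b (x - 1))
    (htrue : ∀ k, x ≤ k → k + 1 ≤ e → b k)
    (hbe : ¬ b e ∨ n - p < e)
    (h : MaxRunP n p b x' y') (hy' : y' ≤ e) :
    y' ≤ lo ∨ (x' = x ∧ y' = min (e - 1) (n - p)) := by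
  obtain ⟨hx'1, hlen, hyn, htr, hbl, hbr⟩ := h
  by_cases hylo : y' ≤ lo
  · exact Or.inl hylo
  push_neg at hylo
  have hx'lo : lo < x' := by
    by_contra hc
    push_neg at hc
    have hblo : b lo := htr lo hc (le_of_lt hylo)
    rcases hbarlo with h0 | hnb
    · omega
    · exact absurd hblo hnb
  obtain ⟨a, hda, hax', hay'⟩ := exists_anchor hp hx'1 hlen
  have halo : lo < a := lt_of_lt_of_le hx'lo hax'
  have hamp : m * p ≤ a := anchor_ge hp hda (by omega)
  have hxa : x ≤ a := le_trans hxmp hamp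
  have hxx' : x ≤ x' := by
    rcases hbarx with h1 | hnb
    · omega
    · by_contra hc
      push_neg at hc
      exact hnb (htr (x - 1) (by omega) (by omega))
  have hx'x : x' = x := by
    rcases eq_or_lt_of_le hxx' with heq | hlt
    · exact heq.symm
    · exfalso
      exact hbl (by omega) (htrue (x' - 1) (by omega) (by omega))
  have hy'e : y' + 1 ≤ e := by
    rcases eq_or_lt_of_le hy' with heq | hlt
    · exfalso
      rcases hbe with hnb | hov
      · exact hnb (heq ▸ htr y' (by omega) le_rfl)
      · omega
    · omega
  have hy'n : y' ≤ n - p := by omega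
  refine Or.inr ⟨hx'x, ?_⟩
  rcases eq_or_lt_of_le (le_min (by omega) hy'n : y' ≤ min (e - 1) (n - p)) with heq | hlt
  · exact heq
  · exfalso
    have h1 : y' + 1 + 1 ≤ e := by
      have := min_le_left (e - 1) (n - p); omega
    have h2 : y' + p < n := by
      have := min_le_right (e - 1) (n - p); omega
    exact hbr h2 (htrue (y' + 1) (by omega) h1)

/-- The discovered run is indeed a maximal run, for any pattern consistent
with the answers obtained so far. -/
lemma maxrun_build {n p : ℕ} (hp : 0 < p) {b : ℕ → Prop} {x e x' y' : ℕ}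
    (hbarx : x = 1 ∨ ¬ b (x - 1))
    (htrue : ∀ k, x ≤ k → k + 1 ≤ e → b k)
    (hbe : ¬ b e ∨ n - p < e)
    (hx1 : 1 ≤ x) (hlen : x + p ≤ y' + 1) (hyn : y' + p ≤ n)
    (hx' : x' = x) (hy' : y' = min (e - 1) (n - p)) : MaxRunP n p b x' y' := by
  subst hx'
  refine ⟨hx1, hlen, hyn, ?_, ?_, ?_⟩
  · intro k hk hk2
    exact htrue k hk (by omega)
  · intro hx2
    rcases hbarx with h1 | hnb
    · omega
    · exact hnb
  · intro hlt
    rcases hbe with hnb | hov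
    · have : y' + 1 = e := by omega
      rwa [this]
    · omega

/-- One-directional transfer of maximal runs across strings answering the
queries identically. -/
lemma rexp_core {n p : ℕ} (hp : 0 < p) {m lo x e : ℕ} {b₁ b₂ : ℕ → Prop}
    (hml : (m - 1) * p ≤ lo) (hlox : lo < x) (hxmp : x ≤ m * p) (hx1 : 1 ≤ x)
    (hbarlo1 : lo = 0 ∨ ¬ b₁ lo)
    (hbarx1 : x = 1 ∨ ¬ b₁ (x - 1)) (hbarx2 : x = 1 ∨ ¬ b₂ (x - 1))
    (htrue1 : ∀ k, x ≤ k → k + 1 ≤ e → b₁ k) (htrue2 : ∀ k, x ≤ k → k + 1 ≤ e → b₂ k)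
    (hbe1 : ¬ b₁ e ∨ n - p < e) (hbe2 : ¬ b₂ e ∨ n - p < e)
    (h4 : ∀ u v, v ≤ lo → MaxRunP n p b₁ u v → MaxRunP n p b₂ u v)
    {x' y' : ℕ} (hy' : y' ≤ e) (h : MaxRunP n p b₁ x' y') : MaxRunP n p b₂ x' y' := by
  rcases maxrun_tri hp hml hlox hxmp hx1 hbarlo1 hbarx1 htrue1 hbe1 h hy' with hc | ⟨hx, hy⟩
  · exact h4 _ _ hc h
  · exact maxrun_build hp hbarx2 htrue2 hbe2 hx1 (hx ▸ h.2.1) h.2.2.1 hx hy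

/-- Conclusion at a leaf of the scanning phase. -/
lemma leaf_conclude {n p : ℕ} (hp : 0 < p) {m lo : ℕ} {b₁ b₂ : ℕ → Prop}
    (h2 : (m - 1) * p ≤ lo) (hN : n - p < m * p)
    (hbar : lo = 0 ∨ (¬ b₁ lo ∧ ¬ b₂ lo))
    (h4 : ∀ x y, y ≤ lo → (MaxRunP n p b₁ x y ↔ MaxRunP n p b₂ x y)) :
    ∀ x y, MaxRunP n p b₁ x y ↔ MaxRunP n p b₂ x y := by
  intro x y
  constructor
  · intro h
    have hynp : y + p ≤ n := h.2.2.1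
    have hy : y ≤ m * p := by omega
    have hle := maxrun_le hp h2 (hbar.imp id And.left) h hy (Or.inl (by omega))
    exact (h4 x y hle).mp h
  · intro h
    have hynp : y + p ≤ n := h.2.2.1
    have hy : y ≤ m * p := by omega
    have hle := maxrun_le hp h2 (hbar.imp id And.right) h hy (Or.inl (by omega))
    exact (h4 x y hle).mpr h

/-- Advancing the barrier to a failed anchor. -/
lemma extend_i4 {n p : ℕ} (hp : 0 < p) {m lo : ℕ} {b₁ b₂ : ℕ → Prop}
    (h2 : (m - 1) * p ≤ lo)
    (hbar : lo = 0 ∨ (¬ b₁ lo ∧ ¬ b₂ lo))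
    (h4 : ∀ x y, y ≤ lo → (MaxRunP n p b₁ x y ↔ MaxRunP n p b₂ x y))
    (hb1 : ¬ b₁ (m * p)) (hb2 : ¬ b₂ (m * p)) :
    ∀ x y, y ≤ m * p → (MaxRunP n p b₁ x y ↔ MaxRunP n p b₂ x y) := by
  intro x y hy
  constructor
  · intro h
    exact (h4 x y (maxrun_le hp h2 (hbar.imp id And.left) h hy (Or.inr hb1))).mp h
  · intro h
    exact (h4 x y (maxrun_le hp h2 (hbar.imp id And.right) h hy (Or.inr hb2))).mpr h
/-! ### Correctness of the tree. -/

/-- Symmetric conclusion after a full expansion. -/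
lemma rexp_conclude {n p : ℕ} (hp : 0 < p) {m lo x e : ℕ} {b₁ b₂ : ℕ → Prop}
    (hml : (m - 1) * p ≤ lo) (hlox : lo < x) (hxmp : x ≤ m * p) (hx1 : 1 ≤ x)
    (hbarlo : lo = 0 ∨ (¬ b₁ lo ∧ ¬ b₂ lo))
    (hbarx : x = 1 ∨ (¬ b₁ (x - 1) ∧ ¬ b₂ (x - 1)))
    (htrue : ∀ k, x ≤ k → k + 1 ≤ e → b₁ k ∧ b₂ k)
    (hbe : (¬ b₁ e ∧ ¬ b₂ e) ∨ n - p < e)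
    (h4 : ∀ u v, v ≤ lo → (MaxRunP n p b₁ u v ↔ MaxRunP n p b₂ u v)) :
    ∀ u v, v ≤ e → (MaxRunP n p b₁ u v ↔ MaxRunP n p b₂ u v) := by
  intro u v hv
  constructor
  · exact rexp_core hp hml hlox hxmp hx1 (hbarlo.imp id And.left)
      (hbarx.imp id And.left) (hbarx.imp id And.right)
      (fun k h1 h2 => (htrue k h1 h2).1) (fun k h1 h2 => (htrue k h1 h2).2)
      (hbe.imp And.left id) (hbe.imp And.right id)
      (fun u v hvlo h => (h4 u v hvlo).mp h) hv
  · exact rexp_core hp hml hlox hxmp hx1 (hbarlo.imp id And.right)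
      (hbarx.imp id And.right) (hbarx.imp id And.left)
      (fun k h1 h2 => (htrue k h1 h2).2) (fun k h1 h2 => (htrue k h1 h2).1)
      (hbe.imp And.right id) (hbe.imp And.left id)
      (fun u v hvlo h => (h4 u v hvlo).mpr h) hv

/-- Unrestricted conclusion, in the overflow case `n - p < e`. -/
lemma rexp_conclude_all {n p : ℕ} (hp : 0 < p) {m lo x e : ℕ} {b₁ b₂ : ℕ → Prop}
    (hml : (m - 1) * p ≤ lo) (hlox : lo < x) (hxmp : x ≤ m * p) (hx1 : 1 ≤ x)
    (hbarlo : lo = 0 ∨ (¬ b₁ lo ∧ ¬ b₂ lo))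
    (hbarx : x = 1 ∨ (¬ b₁ (x - 1) ∧ ¬ b₂ (x - 1)))
    (htrue : ∀ k, x ≤ k → k + 1 ≤ e → b₁ k ∧ b₂ k)
    (hov : n - p < e)
    (h4 : ∀ u v, v ≤ lo → (MaxRunP n p b₁ u v ↔ MaxRunP n p b₂ u v)) :
    ∀ u v, MaxRunP n p b₁ u v ↔ MaxRunP n p b₂ u v := by
  intro u v
  by_cases hv : v ≤ e
  · exact rexp_conclude hp hml hlox hxmp hx1 hbarlo hbarx htrue (Or.inr hov) h4 u v hv
  · exact iff_of_false (fun h => hv (by have := h.2.2.1; omega))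
      (fun h => hv (by have := h.2.2.1; omega))

/-- Correctness of the right-expansion phase. -/
lemma rexp_correct (n p : ℕ) (hp : 0 < p) (c : ℕ) {α : Type*} [LinearOrder α]
    (t₁ t₂ : ℕ → α)
    (SC : ∀ m' lo', 1 ≤ m' → (m' - 1) * p ≤ lo' → lo' < m' * p →
      n - p < m' * p + c * p →
      (lo' = 0 ∨ (¬ (t₁ (lo' + p) = t₁ lo') ∧ ¬ (t₂ (lo' + p) = t₂ lo'))) →
      (∀ u v, v ≤ lo' → (MaxRunP n p (fun k => t₁ (k + p) = t₁ k) u v ↔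
        MaxRunP n p (fun k => t₂ (k + p) = t₂ k) u v)) →
      (scanT n p c m' lo').path t₁ = (scanT n p c m' lo').path t₂ →
      ∀ u v, MaxRunP n p (fun k => t₁ (k + p) = t₁ k) u v ↔
        MaxRunP n p (fun k => t₂ (k + p) = t₂ k) u v)
    (m lo x : ℕ)
    (hm : 1 ≤ m) (hml : (m - 1) * p ≤ lo) (hlox : lo < x) (hxmp : x ≤ m * p) (hx1 : 1 ≤ x)
    (hfuel0 : n - p < m * p + (c + 1) * p)
    (hbarlo : lo = 0 ∨ (¬ (t₁ (lo + p) = t₁ lo) ∧ ¬ (t₂ (lo + p) = t₂ lo)))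
    (hbarx : x = 1 ∨ (¬ (t₁ (x - 1 + p) = t₁ (x - 1)) ∧ ¬ (t₂ (x - 1 + p) = t₂ (x - 1))))
    (h4 : ∀ u v, v ≤ lo → (MaxRunP n p (fun k => t₁ (k + p) = t₁ k) u v ↔
      MaxRunP n p (fun k => t₂ (k + p) = t₂ k) u v)) :
    ∀ d e, n - p + 2 ≤ d + e → m * p + 1 ≤ e →
      (∀ k, x ≤ k → k + 1 ≤ e → ((t₁ (k + p) = t₁ k) ∧ (t₂ (k + p) = t₂ k))) →
      (rexpT n p (fun e' => scanT n p c (e' / p + 1) e') d e).path t₁ =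
        (rexpT n p (fun e' => scanT n p c (e' / p + 1) e') d e).path t₂ →
      ∀ u v, MaxRunP n p (fun k => t₁ (k + p) = t₁ k) u v ↔
        MaxRunP n p (fun k => t₂ (k + p) = t₂ k) u v := by
  intro d
  induction d with
  | zero =>
    intro e hfe hme htrue _
    exact rexp_conclude_all hp hml hlox hxmp hx1 hbarlo hbarx htrue (by omega) h4
  | succ d ih =>
    intro e hfe hme htrue hpath
    by_cases hov : n - p < e
    · exact rexp_conclude_all hp hml hlox hxmp hx1 hbarlo hbarx htrue hov h4
    · rw [rexpT, if_neg hov] at hpath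
      rcases path_node_same hpath with ⟨hb1, hb2, hpe⟩ | ⟨hb1, hb2, hpl⟩
      · -- match: keep expanding right
        refine ih (e + 1) (by omega) (by omega) ?_ hpe
        intro k hk hk2
        rcases eq_or_lt_of_le hk2 with heq | hlt
        · have : k = e := by omega
          subst this
          exact ⟨hb1, hb2⟩
        · exact htrue k hk (by omega)
      · -- mismatch at e: continue scanning at the next anchor
        have hdiv : m ≤ e / p := (Nat.le_div_iff_mul_le hp).mpr (by omega)
        have hmul : (m + 1) * p ≤ (e / p + 1) * p := Nat.mul_le_mul_right p (by omega)
        have hr1 : (m + 1) * p + c * p = m * p + (c + 1) * p := by ring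
        have hdm : p * (e / p) + e % p = e := Nat.div_add_mod e p
        have hml' : e / p * p = p * (e / p) := mul_comm _ _
        have hmod : e % p < p := Nat.mod_lt _ hp
        have hr2 : (e / p + 1) * p = e / p * p + p := by ring
        refine SC (e / p + 1) e (by omega) (by simpa using Nat.div_mul_le_self e p)
          (by omega) (by omega) (Or.inr ⟨hb1, hb2⟩) ?_ hpl
        exact rexp_conclude hp hml hlox hxmp hx1 hbarlo hbarx htrue
          (Or.inl ⟨hb1, hb2⟩) h4

/-- Correctness of the left-expansion phase. -/
lemma lexp_correct (n p : ℕ) (hp : 0 < p) (c : ℕ) {α : Type*} [LinearOrder α]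
    (t₁ t₂ : ℕ → α)
    (SC : ∀ m' lo', 1 ≤ m' → (m' - 1) * p ≤ lo' → lo' < m' * p →
      n - p < m' * p + c * p →
      (lo' = 0 ∨ (¬ (t₁ (lo' + p) = t₁ lo') ∧ ¬ (t₂ (lo' + p) = t₂ lo'))) →
      (∀ u v, v ≤ lo' → (MaxRunP n p (fun k => t₁ (k + p) = t₁ k) u v ↔
        MaxRunP n p (fun k => t₂ (k + p) = t₂ k) u v)) →
      (scanT n p c m' lo').path t₁ = (scanT n p c m' lo').path t₂ →
      ∀ u v, MaxRunP n p (fun k => t₁ (k + p) = t₁ k) u v ↔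
        MaxRunP n p (fun k => t₂ (k + p) = t₂ k) u v)
    (m lo : ℕ)
    (hm : 1 ≤ m) (hml : (m - 1) * p ≤ lo) (hlo3 : lo < m * p)
    (hfuel0 : n - p < m * p + (c + 1) * p)
    (hbarlo : lo = 0 ∨ (¬ (t₁ (lo + p) = t₁ lo) ∧ ¬ (t₂ (lo + p) = t₂ lo)))
    (h4 : ∀ u v, v ≤ lo → (MaxRunP n p (fun k => t₁ (k + p) = t₁ k) u v ↔
      MaxRunP n p (fun k => t₂ (k + p) = t₂ k) u v)) :
    ∀ k, lo ≤ k → k + 1 ≤ m * p →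
      (∀ j', k + 1 ≤ j' → j' ≤ m * p → ((t₁ (j' + p) = t₁ j') ∧ (t₂ (j' + p) = t₂ j'))) →
      (lexpT p lo (rexpT n p (fun e' => scanT n p c (e' / p + 1) e') (n + 2) (m * p + 1)) k).path t₁ =
        (lexpT p lo (rexpT n p (fun e' => scanT n p c (e' / p + 1) e') (n + 2) (m * p + 1)) k).path t₂ →
      ∀ u v, MaxRunP n p (fun k => t₁ (k + p) = t₁ k) u v ↔
        MaxRunP n p (fun k => t₂ (k + p) = t₂ k) u v := by
  intro k
  induction k with
  | zero =>
    intro hlok hkm htrue hpath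
    have hlo0 : lo = 0 := by omega
    rw [lexpT] at hpath
    refine rexp_correct n p hp c t₁ t₂ SC m lo 1 hm hml (by omega) (by omega) le_rfl
      hfuel0 hbarlo (Or.inl rfl) h4 (n + 2) (m * p + 1) (by omega) le_rfl ?_ hpath
    intro k' hk1 hk2
    exact htrue k' (by omega) (by omega)
  | succ k ih =>
    intro hlok hkm htrue hpath
    by_cases hc : k + 1 ≤ lo
    · -- reached the barrier: switch to right expansion with x = lo + 1
      have hloeq : lo = k + 1 := by omega
      rw [lexpT, if_pos hc] at hpath
      refine rexp_correct n p hp c t₁ t₂ SC m lo (k + 2) hm hml (by omega) (by omega)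
        (by omega) hfuel0 hbarlo ?_ h4 (n + 2) (m * p + 1) (by omega) le_rfl ?_ hpath
      · refine Or.inr ?_
        rw [show k + 2 - 1 = lo by omega]
        rcases hbarlo with h0 | hpair
        · omega
        · exact hpair
      · intro k' hk1 hk2
        exact htrue k' (by omega) (by omega)
    · rw [lexpT, if_neg hc] at hpath
      rcases path_node_same hpath with ⟨hb1, hb2, hpe⟩ | ⟨hb1, hb2, hpl⟩
      · -- match: keep expanding left
        refine ih (by omega) (by omega) ?_ hpe
        intro j' hj1 hj2
        rcases eq_or_lt_of_le hj1 with heq | hlt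
        · have : j' = k + 1 := by omega
          subst this
          exact ⟨hb1, hb2⟩
        · exact htrue j' (by omega) hj2
      · -- mismatch at k+1: switch to right expansion with x = k + 2
        refine rexp_correct n p hp c t₁ t₂ SC m lo (k + 2) hm hml (by omega) (by omega)
          (by omega) hfuel0 hbarlo ?_ h4 (n + 2) (m * p + 1) (by omega) le_rfl ?_ hpl
        · refine Or.inr ?_
          rw [show k + 2 - 1 = k + 1 by omega]
          exact ⟨hb1, hb2⟩
        · intro k' hk1 hk2
          exact htrue k' (by omega) (by omega)

/-- Correctness of the scanning phase. -/
lemma scan_correct (n p : ℕ) (hp : 0 < p) :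
    ∀ (c : ℕ) {α : Type*} [LinearOrder α] (t₁ t₂ : ℕ → α) (m lo : ℕ),
      1 ≤ m → (m - 1) * p ≤ lo → lo < m * p → n - p < m * p + c * p →
      (lo = 0 ∨ (¬ (t₁ (lo + p) = t₁ lo) ∧ ¬ (t₂ (lo + p) = t₂ lo))) →
      (∀ u v, v ≤ lo → (MaxRunP n p (fun k => t₁ (k + p) = t₁ k) u v ↔
        MaxRunP n p (fun k => t₂ (k + p) = t₂ k) u v)) →
      (scanT n p c m lo).path t₁ = (scanT n p c m lo).path t₂ →
      ∀ u v, MaxRunP n p (fun k => t₁ (k + p) = t₁ k) u v ↔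
        MaxRunP n p (fun k => t₂ (k + p) = t₂ k) u v := by
  intro c
  induction c with
  | zero =>
    intro α _ t₁ t₂ m lo hm hml hlo hfuel hbar h4 _
    exact leaf_conclude hp hml (by omega) hbar h4
  | succ c ih =>
    intro α inst t₁ t₂ m lo hm hml hlo hfuel hbar h4 hpath
    by_cases hN : n - p < m * p
    · exact leaf_conclude hp hml hN hbar h4
    · rw [scanT, if_neg hN] at hpath
      push_neg at hN
      have hmp1 : 1 ≤ m * p := Nat.one_le_iff_ne_zero.mpr (by positivity)
      rcases path_node_same hpath with ⟨hb1, hb2, hpe⟩ | ⟨hb1, hb2, hpl⟩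
      · -- anchor matches: expand
        refine lexp_correct n p hp c t₁ t₂ (fun m' lo' => ih t₁ t₂ m' lo') m lo hm hml hlo
          hfuel hbar h4 (m * p - 1) (by omega) (by omega) ?_ ?_
        · intro j' hj1 hj2
          have : j' = m * p := by omega
          subst this
          exact ⟨hb1, hb2⟩
        · exact hpe
      · -- anchor mismatches: advance
        have hr : (m + 1) * p = m * p + p := by ring
        have hr2 : (m + 1) * p + c * p = m * p + (c + 1) * p := by ring
        refine ih t₁ t₂ (m + 1) (m * p) (by omega) (by simp) (by omega) (by omega)
          (Or.inr ⟨hb1, hb2⟩) ?_ hpl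
        exact extend_i4 hp hml hbar h4 hb1 hb2
/-! ### Well-formedness and basic height. -/

lemma wf_rexp (n p : ℕ) (g : ℕ → DecisionTree)
    (hg : ∀ e', 1 ≤ e' → DecisionTree.WF n (g e')) :
    ∀ d e, 1 ≤ e → DecisionTree.WF n (rexpT n p g d e) := by
  intro d
  induction d with
  | zero => intro e he; trivial
  | succ d ih =>
    intro e he
    rw [rexpT]
    split_ifs with hov
    · trivial
    · exact ⟨he, by omega, by omega, by omega, hg e he, ih (e + 1) (by omega), hg e he⟩

lemma wf_lexp (n p lo : ℕ) (r : DecisionTree) (hr : DecisionTree.WF n r) :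
    ∀ k, k + p ≤ n → DecisionTree.WF n (lexpT p lo r k) := by
  intro k
  induction k with
  | zero => intro _; exact hr
  | succ k ih =>
    intro hk
    rw [lexpT]
    split_ifs with hc
    · exact hr
    · exact ⟨by omega, by omega, by omega, by omega, hr, ih (by omega), hr⟩

lemma wf_scan (n p : ℕ) (hp : 0 < p) :
    ∀ c m lo, 1 ≤ m → DecisionTree.WF n (scanT n p c m lo) := by
  intro c
  induction c with
  | zero => intro m lo _; trivial
  | succ c ih =>
    intro m lo hm
    rw [scanT]
    split_ifs with hN
    · trivial
    · push_neg at hN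
      have hmp1 : 1 ≤ m * p := Nat.one_le_iff_ne_zero.mpr (by positivity)
      refine ⟨by omega, by omega, by omega, by omega, ih (m + 1) (m * p) (by omega), ?_,
        ih (m + 1) (m * p) (by omega)⟩
      refine wf_lexp n p lo _ ?_ (m * p - 1) (by omega)
      exact wf_rexp n p (fun e => scanT n p c (e / p + 1) e)
        (fun e' _ => ih (e' / p + 1) e' (Nat.le_add_left 1 _)) (n + 2) (m * p + 1) (by omega)

lemma bh_lexp (p lo : ℕ) (r : DecisionTree) :
    ∀ k, (lexpT p lo r k).basicHeight ≤ 1 + r.basicHeight := by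
  intro k
  induction k with
  | zero => rw [lexpT]; omega
  | succ k ih =>
    rw [lexpT]
    split_ifs with hc
    · omega
    · simp only [DecisionTree.basicHeight]
      omega

lemma bh_rexp (n p : ℕ) (hp : 0 < p) (g : ℕ → DecisionTree)
    (hg : ∀ e', (g e').basicHeight ≤ 2 * ((n - p) / p - e' / p)) :
    ∀ d e, (rexpT n p g d e).basicHeight ≤ 1 + 2 * ((n - p) / p - (e - 1) / p) := by
  intro d
  induction d with
  | zero => intro e; simp [rexpT, DecisionTree.basicHeight]
  | succ d ih =>
    intro e
    rw [rexpT]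
    split_ifs with hov
    · simp [DecisionTree.basicHeight]
    · simp only [DecisionTree.basicHeight]
      have h1 := hg e
      have h2 := ih (e + 1)
      have h3 : (e + 1 - 1) / p = e / p := by simp
      have h4 : (e - 1) / p ≤ e / p := Nat.div_le_div_right (by omega)
      rw [h3] at h2
      omega

lemma bh_scan (n p : ℕ) (hp : 0 < p) :
    ∀ c m lo, (scanT n p c m lo).basicHeight ≤ 2 * ((n - p) / p + 1 - m) := by
  intro c
  induction c with
  | zero => intro m lo; simp [scanT, DecisionTree.basicHeight]
  | succ c ih =>
    intro m lo
    rw [scanT]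
    split_ifs with hN
    · simp [DecisionTree.basicHeight]
    · push_neg at hN
      have hm : m ≤ (n - p) / p := (Nat.le_div_iff_mul_le hp).mpr hN
      simp only [DecisionTree.basicHeight]
      have h1 := ih (m + 1) (m * p)
      have hgb : ∀ e', (scanT n p c (e' / p + 1) e').basicHeight ≤
          2 * ((n - p) / p - e' / p) := by
        intro e'
        have := ih (e' / p + 1) e'
        have he : (n - p) / p + 1 - (e' / p + 1) = (n - p) / p - e' / p := by omega
        rwa [he] at this
      have h2 := bh_rexp n p hp (fun e => scanT n p c (e / p + 1) e) hgb (n + 2) (m * p + 1)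
      have h3 : (m * p + 1 - 1) / p = m := by
        simp [Nat.mul_div_cancel _ hp]
      rw [h3] at h2
      have h4 := bh_lexp p lo
        (rexpT n p (fun e => scanT n p c (e / p + 1) e) (n + 2) (m * p + 1)) (m * p - 1)
      omega
/-- For any positive `n` and `p` there is a decision tree finding all
`p`-periodic runs in strings of length `n` whose basic height is at most
`2⌈n/p⌉`. -/
theorem p_periodic_runs_decision_tree (n p : ℕ) (hn : 0 < n) (hp : 0 < p) :
    ∃ T : DecisionTree, T.WF n ∧ FindsAllPPeriodicRuns n p T ∧
      T.basicHeight ≤ 2 * ((n + p - 1) / p) := by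
  refine ⟨scanT n p (n + 2) 1 0, wf_scan n p hp (n + 2) 1 0 le_rfl, ?_, ?_⟩
  · intro α inst t₁ t₂ hpath i j
    rw [pprun_iff_maxrun t₁ n p i j hp, pprun_iff_maxrun t₂ n p i j hp]
    have hfuel : n - p < 1 * p + (n + 2) * p := by
      have h1 : n + 2 ≤ (n + 2) * p := Nat.le_mul_of_pos_right _ hp
      omega
    have h4 : ∀ u v, v ≤ 0 → (MaxRunP n p (fun k => t₁ (k + p) = t₁ k) u v ↔
        MaxRunP n p (fun k => t₂ (k + p) = t₂ k) u v) := by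
      intro u v hv
      have hv0 : v = 0 := by omega
      subst hv0
      refine iff_of_false ?_ ?_ <;> rintro ⟨h1m, h2m, -⟩ <;> omega
    have hc := scan_correct n p hp (n + 2) t₁ t₂ 1 0 le_rfl (by simp) (by omega) hfuel
      (Or.inl rfl) h4 hpath
    exact and_congr_right fun _ => hc i (j - p)
  · have h1 := bh_scan n p hp (n + 2) 1 0
    have h2 : (n - p) / p ≤ (n + p - 1) / p := Nat.div_le_div_right (by omega)
    omega
end

section
/- For every fixed integer d ≥ 1 there exists a constant C (depending only on d) such that every string t of length n contains at most C·n d-short runs; that is, the number of pairs (i,j) such that t[i..j] is a d-short run of t is at most C·n. -/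
/-- `t[i..j]` is a `d`-short run of `t[1..n]`: it can be written as `xyx` with
`x, y` nonempty, `|y| ≤ d`, `|x|` the minimal period of `t[i..j]` (so
`|x| + |y|` is a period of `t[i..j]` of length `2|x| + |y|`), and the
extensions `t[i-1..j]`, `t[i..j+1]` (when defined) have strictly larger
minimal periods. -/
def IsDShortRun {α : Type*} (t : ℕ → α) (n d i j : ℕ) : Prop :=
  1 ≤ i ∧ i ≤ j ∧ j ≤ n ∧
  (∃ x y : ℕ, 0 < x ∧ 0 < y ∧ y ≤ d ∧ j + 1 - i = 2 * x + y ∧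
    x = minPeriod t i j ∧ IsPeriodOf t i j (x + y)) ∧
  (1 < i → minPeriod t i j < minPeriod t (i - 1) j) ∧
  (j < n → minPeriod t i j < minPeriod t i (j + 1))

section Periods

variable {α : Type*} {t : ℕ → α} {i j p q : ℕ}

lemma isPeriodOf_length (hij : i ≤ j) : IsPeriodOf t i j (j + 1 - i) :=
  ⟨by omega, le_rfl, fun _ _ _ => by omega⟩

lemma minPeriod_isPeriodOf (hij : i ≤ j) : IsPeriodOf t i j (minPeriod t i j) :=
  Nat.sInf_mem (s := {p | IsPeriodOf t i j p}) ⟨_, isPeriodOf_length hij⟩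

lemma minPeriod_le_of_isPeriodOf (h : IsPeriodOf t i j p) : minPeriod t i j ≤ p :=
  Nat.sInf_le h

lemma IsPeriodOf.of_add (hp : IsPeriodOf t i j p) (hpq : IsPeriodOf t i j (p + q))
    (hq : 0 < q) (hlen : 2 * p + q ≤ j + 1 - i) : IsPeriodOf t i j q := by
  obtain ⟨-, -, hp⟩ := hp
  obtain ⟨-, -, hpq⟩ := hpq
  refine ⟨hq, by omega, fun k hik hkj => ?_⟩
  by_cases hk : k + p + q ≤ j
  · calc t (k + q) = t (k + q + p) := (hp _ (by omega) (by omega)).symm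
      _ = t (k + (p + q)) := by rw [Nat.add_right_comm, Nat.add_assoc]
      _ = t k := hpq _ hik (by omega)
  · -- the word is long enough that `k` is at least `p` past its start
    calc t (k + q) = t (k - p + (p + q)) := by congr 1; omega
      _ = t (k - p) := hpq _ (by omega) (by omega)
      _ = t (k - p + p) := (hp _ (by omega) (by omega)).symm
      _ = t k := by congr 1; omega

end Periods

lemma IsDShortRun.length_le {α : Type*} {t : ℕ → α} {n d i j : ℕ}
    (h : IsDShortRun t n d i j) : j + 1 - i ≤ 3 * d := by
  obtain ⟨-, hij, -, ⟨x, y, -, hy, hyd, hlen, rfl, hper⟩, -⟩ := h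
  have hx_le_y : minPeriod t i j ≤ y :=
    minPeriod_le_of_isPeriodOf ((minPeriod_isPeriodOf hij).of_add hper hy hlen.ge)
  omega

lemma ncard_le_of_forall_short_interval {S : Set (ℕ × ℕ)} {n L : ℕ}
    (hS : ∀ ij ∈ S, 1 ≤ ij.1 ∧ ij.1 ≤ n ∧ ij.1 ≤ ij.2 ∧ ij.2 < ij.1 + L) :
    S.ncard ≤ L * n := by
  set I : Finset (ℕ × ℕ) := Finset.Icc 1 n ×ˢ Finset.range L
  have hsub : S ⊆ ↑(I.image fun il => (il.1, il.1 + il.2)) := by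
    rintro ⟨i, j⟩ hij
    obtain ⟨h1, hin, hij, hjL⟩ := hS _ hij
    simp only [Finset.coe_image, Set.mem_image, Finset.mem_coe, I, Finset.mem_product,
      Finset.mem_Icc, Finset.mem_range, Prod.exists, Prod.mk.injEq]
    exact ⟨i, j - i, ⟨⟨h1, hin⟩, by omega⟩, rfl, by omega⟩
  calc S.ncard ≤ (I.image fun il => (il.1, il.1 + il.2)).card := by
        rw [← Set.ncard_coe_finset]
        exact Set.ncard_le_ncard hsub (Finset.finite_toSet _)
    _ ≤ I.card := Finset.card_image_le
    _ = L * n := by simp [I, mul_comm]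

theorem number_of_short_runs_linear_general (d : ℕ) :
    ∃ C : ℕ, ∀ (α : Type) [LinearOrder α] (n : ℕ) (t : ℕ → α),
      {ij : ℕ × ℕ | IsDShortRun t n d ij.1 ij.2}.ncard ≤ C * n := by
  refine ⟨3 * d, fun α _ n t => ncard_le_of_forall_short_interval fun ij hrun => ?_⟩
  have hlen := hrun.length_le
  obtain ⟨hi, hij, hjn, -⟩ := hrun
  omega

/-- For every fixed `d ≥ 1` there is a constant `C` such that every string of
length `n` contains at most `C · n` `d`-short runs. -/
theorem number_of_short_runs_linear (d : ℕ) (hd : 1 ≤ d) :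
    ∃ C : ℕ, ∀ (α : Type) [LinearOrder α] (n : ℕ) (t : ℕ → α),
      {ij : ℕ × ℕ | IsDShortRun t n d ij.1 ij.2}.ncard ≤ C * n :=
  number_of_short_runs_linear_general d
end

section
/- Let t be a string and let t₁ = t[i₁..j₁] and t₂ = t[i₂..j₂] be substrings of t with periods p₁ and p₂ respectively. Suppose the two occurrence intervals overlap in at least p₁ + p₂ − gcd(p₁,p₂) positions, i.e., min(j₁,j₂) − max(i₁,i₂) + 1 ≥ p₁ + p₂ − gcd(p₁,p₂). Then gcd(p₁,p₂) is a period of both t₁ and t₂. -/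
/-!
The overlap `t[max i₁ i₂..min j₁ j₂]` has both periods `p₁` and `p₂` and length at least
`p₁ + p₂ - gcd p₁ p₂`, so by the Fine–Wilf periodicity lemma (`List.HasPeriod.gcd`) it has period
`g = gcd p₁ p₂`. Being at least `p₁` long, the overlap meets every residue class mod `p₁` of
positions of `t[i₁..j₁]`; as `g ∣ p₁`, the letters of `t[i₁..j₁]` are then constant on residue
classes mod `g`, which makes `g` a period of it. The same holds for `t[i₂..j₂]`.
-/

def HasPeriodOn {α : Type*} (t : ℕ → α) (a b p : ℕ) : Prop :=
  ∀ k, a ≤ k → k + p ≤ b → t (k + p) = t k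

def substring {α : Type*} (t : ℕ → α) (a b : ℕ) : List α :=
  List.ofFn fun k : Fin (b + 1 - a) => t (a + k)

theorem Nat.exists_modEq_mem_Ico {p : ℕ} (a k : ℕ) (hp : 0 < p) :
    ∃ x, a ≤ x ∧ x < a + p ∧ x ≡ k [MOD p] := by
  have hpa : a ≤ p * a := Nat.le_mul_of_pos_left a hp
  refine ⟨a + (k + p * a - a) % p, Nat.le_add_right _ _,
    Nat.add_lt_add_left (Nat.mod_lt _ hp) a, ?_⟩
  calc a + (k + p * a - a) % p ≡ a + (k + p * a - a) [MOD p] := (Nat.mod_modEq _ _).add_left a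
    _ = k + p * a := by omega
    _ ≡ k [MOD p] := (Nat.modEq_add_modulus_mul_iff.mpr rfl).symm

section

variable {α : Type*} {t : ℕ → α} {a b p : ℕ}

theorem hasPeriod_substring_iff : (substring t a b).HasPeriod p ↔ HasPeriodOn t a b p := by
  simp only [List.hasPeriod_iff_getElem?, substring, List.length_ofFn, List.getElem?_ofFn]
  constructor
  · intro h k hk hkb
    simpa [show k - a < b + 1 - a by omega, show k - a + p < b + 1 - a by omega,
      show a + (k - a) = k by omega, show a + (k - a + p) = k + p by omega, eq_comm]
      using h (k - a) (by omega)
  · intro h k hk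
    simpa [show k < b + 1 - a by omega, show k + p < b + 1 - a by omega, ← add_assoc]
      using (h (a + k) (by omega) (by omega)).symm

namespace HasPeriodOn

theorem mono {a' b' : ℕ} (h : HasPeriodOn t a b p) (ha : a ≤ a') (hb : b' ≤ b) :
    HasPeriodOn t a' b' p :=
  fun k hk hkb => h k (ha.trans hk) (hkb.trans hb)

theorem gcd {q : ℕ} (hp : HasPeriodOn t a b p) (hq : HasPeriodOn t a b q)
    (hlen : p + q - p.gcd q ≤ b + 1 - a) : HasPeriodOn t a b (p.gcd q) := by
  rw [← hasPeriod_substring_iff] at *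
  exact hp.gcd hq (by simpa [substring] using hlen)

theorem apply_add_mod {k : ℕ} (h : HasPeriodOn t a b p) (hk : a + k ≤ b) :
    t (a + k % p) = t (a + k) := by
  have hk' : k < b + 1 - a := by omega
  have hmod := (hasPeriod_substring_iff.mpr h).getElem?_mod p k _ (by simpa [substring] using hk')
  simpa [substring, List.getElem?_ofFn, hk', (Nat.mod_le k p).trans_lt hk'] using hmod

theorem apply_eq_of_modEq {u v : ℕ} (h : HasPeriodOn t a b p) (hu : a ≤ u) (hub : u ≤ b)
    (hv : a ≤ v) (hvb : v ≤ b) (huv : u ≡ v [MOD p]) : t u = t v := by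
  obtain ⟨k, rfl⟩ := Nat.exists_eq_add_of_le hu
  obtain ⟨l, rfl⟩ := Nat.exists_eq_add_of_le hv
  rw [← h.apply_add_mod hub, ← h.apply_add_mod hvb, Nat.ModEq.add_left_cancel' a huv]

theorem of_dvd_of_subinterval {g c d : ℕ} (h : HasPeriodOn t a b p)
    (hcd : HasPeriodOn t c d g) (hgp : g ∣ p) (hp : 0 < p) (hac : a ≤ c) (hdb : d ≤ b)
    (hlen : c + p ≤ d + 1) : HasPeriodOn t a b g := by
  intro k hk hkb
  -- move `k` and `k + g` into `[c, c + p)` along their residue classes mod `p`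
  obtain ⟨x, hcx, hxp, hxk⟩ := Nat.exists_modEq_mem_Ico c k hp
  obtain ⟨y, hcy, hyp, hyk⟩ := Nat.exists_modEq_mem_Ico c (k + g) hp
  have hxy : x ≡ y [MOD g] :=
    calc x ≡ k [MOD g] := hxk.of_dvd hgp
      _ ≡ k + g [MOD g] := Nat.modEq_add_modulus_iff.mpr rfl
      _ ≡ y [MOD g] := (hyk.of_dvd hgp).symm
  calc t (k + g) = t y := h.apply_eq_of_modEq (by omega) hkb (by omega) (by omega) hyk.symm
    _ = t x := (hcd.apply_eq_of_modEq hcx (by omega) hcy (by omega) hxy).symm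
    _ = t k := h.apply_eq_of_modEq (by omega) (by omega) hk (by omega) hxk

end HasPeriodOn

end

/-- If the substrings `t[i₁..j₁]` and `t[i₂..j₂]` have periods `p₁` and `p₂`
respectively and their occurrence intervals overlap in at least
`p₁ + p₂ - gcd(p₁, p₂)` positions, then `gcd(p₁, p₂)` is a period of both. -/
theorem periods_of_overlapping_substrings {α : Type*} (t : ℕ → α)
    (i₁ j₁ i₂ j₂ p₁ p₂ : ℕ)
    (h₁ : IsPeriodOf t i₁ j₁ p₁) (h₂ : IsPeriodOf t i₂ j₂ p₂)
    (hov : (p₁ : ℤ) + p₂ - Nat.gcd p₁ p₂ ≤ (min j₁ j₂ : ℤ) - max i₁ i₂ + 1) :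
    IsPeriodOf t i₁ j₁ (Nat.gcd p₁ p₂) ∧ IsPeriodOf t i₂ j₂ (Nat.gcd p₁ p₂) := by
  obtain ⟨hp₁, hp₁j, hper₁ : HasPeriodOn t i₁ j₁ p₁⟩ := h₁
  obtain ⟨hp₂, hp₂j, hper₂ : HasPeriodOn t i₂ j₂ p₂⟩ := h₂
  have hg₁ : p₁.gcd p₂ ≤ p₁ := Nat.gcd_le_left p₂ hp₁
  have hg₂ : p₁.gcd p₂ ≤ p₂ := Nat.gcd_le_right p₁ hp₂
  have hoverlap : HasPeriodOn t (max i₁ i₂) (min j₁ j₂) (p₁.gcd p₂) :=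
    (hper₁.mono (le_max_left _ _) (min_le_left _ _)).gcd
      (hper₂.mono (le_max_right _ _) (min_le_right _ _)) (by omega)
  have hg : 1 ≤ p₁.gcd p₂ := Nat.gcd_pos_of_pos_left p₂ hp₁
  exact ⟨⟨hg, by omega, hper₁.of_dvd_of_subinterval hoverlap (Nat.gcd_dvd_left p₁ p₂) hp₁
      (le_max_left _ _) (min_le_left _ _) (by omega)⟩,
    ⟨hg, by omega, hper₂.of_dvd_of_subinterval hoverlap (Nat.gcd_dvd_right p₁ p₂) hp₂
      (le_max_right _ _) (min_le_right _ _) (by omega)⟩⟩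
end
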